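/- arXiv:2410.10383 — 8 statements merged into one kernel-verified Lean document; each statement's English description precedes it below -/
import Mathlib

section
/- Let p be an odd prime and a an integer with 0 < a < p, and let n be the length of the continued fraction expansion of a/p. For every index i with 0 < i < n: if i is even then the fractional part of q_i·(a/p) is strictly less than 1/2, and if i is odd then the fractional part of q_i·(a/p) is strictly greater than 1/2. -/
/-- Proposition 2.8 (3): for the canonical continued fraction expansion
`a/p = [0; a_1, …, a_n]` with convergent denominators `q_i`, for `0 < i < n`:
if `i` is even then the fractional part of `q_i·a/p` is `< 1/2`, and if `i`
is odd then it is `> 1/2`. -/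
theorem statement2
    (p a : ℤ) (hp : Prime p) (hodd : Odd p) (ha : 0 < a) (hap : a < p)
    (n : ℕ) (A P Q : ℕ → ℤ)
    -- canonical continued fraction expansion a/p = [0; A 1, …, A n]
    (hA : ∀ k, 1 ≤ k → k ≤ n → 1 ≤ A k) (hAn : 2 ≤ A n)
    -- denominators of the convergents
    (hQ0 : Q 0 = 1) (hQ1 : Q 1 = A 1)
    (hQrec : ∀ k, k + 2 ≤ n → Q (k + 2) = A (k + 2) * Q (k + 1) + Q k)
    -- numerators of the convergents
    (hP0 : P 0 = 0) (hP1 : P 1 = 1)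
    (hPrec : ∀ k, k + 2 ≤ n → P (k + 2) = A (k + 2) * P (k + 1) + P k)
    -- the n-th convergent is a/p in lowest terms
    (hQn : Q n = p) (hPn : P n = a)
    (i : ℕ) (hi0 : 0 < i) (hin : i < n) :
    (Even i → Int.fract (((Q i * a : ℤ) : ℝ) / (p : ℝ)) < 1 / 2) ∧
      (Odd i → 1 / 2 < Int.fract (((Q i * a : ℤ) : ℝ) / (p : ℝ))) := by
  have hn2 : 2 ≤ n := by omega
  set r : ℕ → ℤ := fun k => (-1) ^ k * (Q k * a - P k * p) with hrdef
  -- r n = 0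
  have hrn : r n = 0 := by
    simp only [hrdef, hQn, hPn]
    ring
  -- determinant identity
  have hD : ∀ k, k + 1 ≤ n → P (k + 1) * Q k - P k * Q (k + 1) = (-1) ^ k := by
    intro k
    induction k with
    | zero => intro _; simp [hP0, hP1, hQ0, hQ1]
    | succ k ih =>
      intro hk
      have ih' := ih (by omega)
      have h1 : P (k + 2) = A (k + 2) * P (k + 1) + P k := hPrec k (by omega)
      have h2 : Q (k + 2) = A (k + 2) * Q (k + 1) + Q k := hQrec k (by omega)
      have : P (k + 1 + 1) * Q (k + 1) - P (k + 1) * Q (k + 1 + 1)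
          = -(P (k + 1) * Q k - P k * Q (k + 1)) := by
        rw [show k + 1 + 1 = k + 2 from rfl, h1, h2]; ring
      rw [this, ih']
      ring
  -- r (n-1) = 1
  have hrn1 : r (n - 1) = 1 := by
    have hd := hD (n - 1) (by omega)
    have hnn : n - 1 + 1 = n := by omega
    rw [hnn, hPn, hQn] at hd
    have hd' : Q (n - 1) * a - P (n - 1) * p = (-1) ^ (n - 1) := by linarith [hd]
    show (-1 : ℤ) ^ (n - 1) * (Q (n - 1) * a - P (n - 1) * p) = 1
    rw [hd', ← pow_add]
    exact Even.neg_one_pow ⟨n - 1, rfl⟩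
  -- recurrence for r
  have hrec : ∀ k, k + 2 ≤ n → r k = A (k + 2) * r (k + 1) + r (k + 2) := by
    intro k hk
    simp only [hrdef]
    rw [hQrec k hk, hPrec k hk]
    ring
  -- main downward induction
  have T : ∀ m k, 1 ≤ m → k + m = n →
      0 ≤ r (k + 1) ∧ r (k + 1) < r k ∧ (2 ≤ m → 1 ≤ r (k + 1)) := by
    intro m
    induction m with
    | zero => intro k h1; omega
    | succ m ih =>
      intro k _ hk
      rcases Nat.eq_zero_or_pos m with hm0 | hm1
      · -- m = 0 : k + 1 = n
        subst hm0
        have hk1 : k + 1 = n := by omega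
        have hkn : k = n - 1 := by omega
        rw [hk1, hkn, hrn, hrn1]
        exact ⟨le_refl 0, by norm_num, by omega⟩
      · have ihk := ih (k + 1) hm1 (by omega)
        obtain ⟨h0, hlt, h2⟩ := ihk
        have hr1 : 1 ≤ r (k + 1) := by omega
        have hrec' := hrec k (by omega)
        have hA2 : 1 ≤ A (k + 2) := hA (k + 2) (by omega) (by omega)
        refine ⟨by omega, ?_, fun _ => hr1⟩
        rcases Nat.lt_or_ge m 2 with hm2 | hm2
        · -- m = 1, so k + 2 = n
          have hk2 : k + 2 = n := by omega
          have hrk2 : r (k + 2) = 0 := by rw [hk2, hrn]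
          have hA2' : 2 ≤ A (k + 2) := by rw [hk2]; exact hAn
          rw [hrk2, add_zero] at hrec'
          nlinarith
        · have hrk2 : 1 ≤ r (k + 2) := h2 hm2
          nlinarith
  -- positivity and monotonicity
  have posr : ∀ j, 1 ≤ j → j ≤ n - 1 → 1 ≤ r j := by
    intro j h1 h2
    obtain ⟨h0, hlt, _⟩ := T (n - j) j (by omega) (by omega)
    omega
  have mono : ∀ j, 1 ≤ j → j ≤ n - 1 → r j ≤ r 1 := by
    intro j
    induction j with
    | zero => intro h; omega
    | succ j ih =>
      intro _ hj
      rcases Nat.eq_zero_or_pos j with h | h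
      · subst h; exact le_refl _
      · have h1 := ih h (by omega)
        have h2 := (T (n - j) j (by omega) (by omega)).2.1
        omega
  have hr0 : r 0 = a := by simp [hrdef, hP0, hQ0]
  have hr1v : r 1 = p - A 1 * a := by
    simp only [hrdef, hP1, hQ1]
    ring
  have hA1 : 1 ≤ A 1 := hA 1 le_rfl (by omega)
  have hlt10 : r 1 < r 0 := (T n 0 (by omega) (by omega)).2.1
  have h2r1 : 2 * r 1 < p := by
    have hnn : (A 1 - 1) * a ≥ 0 := mul_nonneg (by omega) (by omega)
    have : r 0 + r 1 ≤ p := by rw [hr0, hr1v]; nlinarith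
    omega
  -- bounds on r i
  have hri1 : 1 ≤ r i := posr i hi0 (by omega)
  have hri2 : 2 * r i < p := by
    have := mono i hi0 (by omega)
    omega
  -- key algebraic identity
  have hei : (Q i * a : ℤ) = P i * p + (-1) ^ i * r i := by
    simp only [hrdef]
    have hsq : ((-1 : ℤ) ^ i) * ((-1 : ℤ) ^ i) = 1 := by
      rw [← pow_add]
      exact Even.neg_one_pow ⟨i, rfl⟩
    linear_combination (-(Q i * a - P i * p)) * hsq
  have hpR : (0 : ℝ) < (p : ℝ) := by exact_mod_cast (by omega : (0:ℤ) < p)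
  have hpne : (p : ℝ) ≠ 0 := ne_of_gt hpR
  have hfrac_pos : (0 : ℝ) < (r i : ℝ) / (p : ℝ) := by
    apply div_pos _ hpR
    exact_mod_cast (by omega : (0:ℤ) < r i)
  have hfrac_half : (r i : ℝ) / (p : ℝ) < 1 / 2 := by
    rw [div_lt_div_iff₀ hpR (by norm_num : (0:ℝ) < 2)]
    have h : ((2 * r i : ℤ) : ℝ) < ((p : ℤ) : ℝ) := by exact_mod_cast hri2
    push_cast at h
    linarith
  constructor
  · intro hev
    have hsign : ((-1 : ℤ) ^ i) = 1 := Even.neg_one_pow hev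
    rw [hsign, one_mul] at hei
    have hx : ((Q i * a : ℤ) : ℝ) / (p : ℝ) = (P i : ℝ) + (r i : ℝ) / (p : ℝ) := by
      rw [hei]
      push_cast
      field_simp
    rw [hx, Int.fract_intCast_add, Int.fract_eq_self.mpr ⟨le_of_lt hfrac_pos, by linarith⟩]
    exact hfrac_half
  · intro hod
    have hsign : ((-1 : ℤ) ^ i) = -1 := Odd.neg_one_pow hod
    rw [hsign, neg_one_mul] at hei
    have hx : ((Q i * a : ℤ) : ℝ) / (p : ℝ)
        = ((P i - 1 : ℤ) : ℝ) + (1 - (r i : ℝ) / (p : ℝ)) := by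
      rw [hei]
      push_cast
      field_simp
      ring
    rw [hx, Int.fract_intCast_add,
      Int.fract_eq_self.mpr ⟨by linarith, by linarith⟩]
    linarith
end

section
/- Let p be an odd prime and a an integer with 1 ≤ a ≤ p−1. Then a divides p−1 if and only if for all integers i, j with 0 ≤ i, 0 ≤ j and i + j ≤ p−1, one has ⌊(i+1)a/p⌋ + ⌊(j+1)a/p⌋ ≤ ⌊(i+j+1)a/p⌋. -/
/-- Real floor of an integer quotient is integer ediv. -/
lemma floor_int_div_real (m p : ℤ) (hp : 0 < p) :
    ⌊((m : ℤ) : ℝ) / (p : ℝ)⌋ = m / p := by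
  have hp0 : (0 : ℝ) < (p : ℝ) := by exact_mod_cast hp
  rw [Int.floor_eq_iff]
  constructor
  · rw [le_div_iff₀ hp0]
    have h1 : (m / p) * p ≤ m := by
      have h2 := Int.mul_ediv_add_emod m p
      have h3 := Int.emod_nonneg m (by omega : p ≠ 0)
      nlinarith
    exact_mod_cast h1
  · rw [div_lt_iff₀ hp0]
    have h2 : m < (m / p + 1) * p := by
      have h3 := Int.mul_ediv_add_emod m p
      have h4 := Int.emod_lt_of_pos m hp
      nlinarith
    exact_mod_cast h2

/-- For an odd prime `p` and an integer `1 ≤ a ≤ p - 1`, `a` divides `p - 1`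
if and only if for all integers `i, j ≥ 0` with `i + j ≤ p - 1` one has
`⌊(i+1)a/p⌋ + ⌊(j+1)a/p⌋ ≤ ⌊(i+j+1)a/p⌋`. -/
theorem statement5
    (p : ℤ) (hp : Prime p) (hodd : Odd p)
    (a : ℤ) (ha1 : 1 ≤ a) (ha2 : a ≤ p - 1) :
    a ∣ p - 1 ↔
      ∀ i j : ℤ, 0 ≤ i → 0 ≤ j → i + j ≤ p - 1 →
        ⌊(((i + 1) * a : ℤ) : ℝ) / (p : ℝ)⌋ + ⌊(((j + 1) * a : ℤ) : ℝ) / (p : ℝ)⌋ ≤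
          ⌊(((i + j + 1) * a : ℤ) : ℝ) / (p : ℝ)⌋ := by
  have hp3 : 3 ≤ p := by obtain ⟨t, ht⟩ := hodd; omega
  have hppos : (0 : ℤ) < p := by omega
  simp only [floor_int_div_real _ p hppos]
  constructor
  · -- forward direction
    rintro ⟨k, hk⟩
    have hk1 : 1 ≤ k := by
      by_contra h
      push_neg at h
      have : a * k ≤ 0 := mul_nonpos_iff.mpr (Or.inl ⟨by omega, by omega⟩)
      omega
    have key : ∀ n : ℤ, 1 ≤ n → n ≤ p → n * a / p = (n - 1) / k := by
      intro n h1 h2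
      have hq := Int.mul_ediv_add_emod (n - 1) k
      set q := (n - 1) / k with hqdef
      set r := (n - 1) % k with hrdef
      have hr0 : 0 ≤ r := Int.emod_nonneg _ (by omega)
      have hrk : r < k := Int.emod_lt_of_pos _ (by omega)
      have hq0 : 0 ≤ q := Int.ediv_nonneg (by omega) (by omega)
      have hqa : q ≤ a := by
        have hle : (n - 1) / k ≤ (p - 1) / k := Int.ediv_le_ediv (by omega) (by omega)
        have heq : (p - 1) / k = a := by
          rw [hk, Int.mul_ediv_cancel _ (by omega : k ≠ 0)]
        omega
      have hna : n * a = ((r + 1) * a - q) + q * p := by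
        linear_combination (-a) * hq - q * hk
      have hs0 : 0 ≤ (r + 1) * a - q := by
        nlinarith [mul_nonneg hr0 (by omega : (0:ℤ) ≤ a)]
      have hsp : (r + 1) * a - q < p := by
        nlinarith [mul_nonneg (by omega : (0:ℤ) ≤ k - (r + 1)) (by omega : (0:ℤ) ≤ a)]
      rw [hna, Int.add_mul_ediv_right _ _ (by omega : p ≠ 0),
        Int.ediv_eq_zero_of_lt hs0 hsp, zero_add]
    intro i j hi hj hij
    rw [key (i + 1) (by omega) (by omega), key (j + 1) (by omega) (by omega),
      key (i + j + 1) (by omega) (by omega)]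
    have e1 : i + 1 - 1 = i := by ring
    have e2 : j + 1 - 1 = j := by ring
    have e3 : i + j + 1 - 1 = i + j := by ring
    rw [e1, e2, e3]
    rw [Int.le_ediv_iff_mul_le (by omega : (0:ℤ) < k)]
    have h1 := Int.mul_ediv_add_emod i k
    have h2 := Int.mul_ediv_add_emod j k
    have m1 := Int.emod_nonneg i (by omega : k ≠ 0)
    have m2 := Int.emod_nonneg j (by omega : k ≠ 0)
    nlinarith
  · -- reverse direction
    intro H
    by_contra hnd
    have ha2' : 2 ≤ a := by
      rcases eq_or_lt_of_le ha1 with h | h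
      · exact absurd (h ▸ one_dvd _) hnd
      · omega
    have hpa : ¬ p ∣ a := fun hd => by
      have := Int.le_of_dvd (by omega) hd
      omega
    have hco : IsCoprime p a := (hp.coprime_iff_not_dvd).mpr hpa
    obtain ⟨u, v, huv⟩ := hco
    set q := (-u) % a with hqdef
    have hq0 : 0 ≤ q := Int.emod_nonneg _ (by omega)
    have hqlt : q < a := Int.emod_lt_of_pos _ (by omega)
    have hu : -u = q + a * ((-u) / a) := by
      rw [hqdef]; exact (Int.emod_add_mul_ediv (-u) a).symm
    set w := (-u) / a with hwdef
    set c : ℤ := v - w * p with hcdef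
    have hqc : q * p + 1 = a * c := by
      rw [hcdef]; linear_combination (-p) * hu - huv
    -- b = p % a
    have hb : a * (p / a) + p % a = p := Int.mul_ediv_add_emod p a
    set b := p % a with hbdef
    set e := p / a with hedef
    have hb0 : 0 ≤ b := Int.emod_nonneg _ (by omega)
    have hblt : b < a := Int.emod_lt_of_pos _ (by omega)
    have hbne0 : b ≠ 0 := by
      intro h0
      have hdvd : a ∣ p := ⟨e, by omega⟩
      have : IsUnit a := IsCoprime.isUnit_of_dvd' ⟨u, v, huv⟩ hdvd dvd_rfl
      rw [Int.isUnit_iff] at this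
      omega
    have hbne1 : b ≠ 1 := by
      intro h1
      exact hnd ⟨e, by omega⟩
    have hq1 : 1 ≤ q := by
      by_contra h
      have hq' : q = 0 := by omega
      have hd1 : a ∣ (1 : ℤ) := ⟨c, by rw [← hqc, hq']; ring⟩
      have := Int.le_of_dvd one_pos hd1
      omega
    have hqne : q ≠ a - 1 := by
      intro h
      apply hnd
      refine ⟨p - c, ?_⟩
      rw [h] at hqc
      linear_combination -hqc
    set n : ℤ := p - c - e with hndef
    have hna : n * a = (b - 1) + (a - 1 - q) * p := by
      rw [hndef]; linear_combination hqc - hb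
    have hca : c * a = 1 + q * p := by linear_combination -hqc
    -- positivity of c and n
    have hm1 : 1 ≤ c := by
      by_contra h
      push_neg at h
      have h5 : c * a ≤ 0 := mul_nonpos_iff.mpr (Or.inr ⟨by omega, by omega⟩)
      have h6 : 1 * p ≤ q * p := mul_le_mul_of_nonneg_right (by omega) (by omega)
      linarith
    have hn1 : 1 ≤ n := by
      by_contra h
      push_neg at h
      have h5 : n * a ≤ 0 := mul_nonpos_iff.mpr (Or.inr ⟨by omega, by omega⟩)
      have h6 : 1 * p ≤ (a - 1 - q) * p := mul_le_mul_of_nonneg_right (by omega) (by omega)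
      linarith
    have hmn : c + n ≤ p + 1 := by
      have hsum : (c + n) * a = (a - 1) * p + b := by linear_combination hna + hca
      have h7 : (c + n) * a ≤ (p + 1) * a := by nlinarith
      exact le_of_mul_le_mul_right h7 (by omega)
    have h := H (c - 1) (n - 1) (by omega) (by omega) (by omega)
    have e1 : c - 1 + 1 = c := by ring
    have e2 : n - 1 + 1 = n := by ring
    have e3 : c - 1 + (n - 1) + 1 = c + n - 1 := by ring
    rw [e1, e2, e3] at h
    have f1 : c * a / p = q := by
      rw [hca, Int.add_mul_ediv_right _ _ (by omega : p ≠ 0),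
        Int.ediv_eq_zero_of_lt (by omega) (by omega), zero_add]
    have f2 : n * a / p = a - 1 - q := by
      rw [hna, Int.add_mul_ediv_right _ _ (by omega : p ≠ 0),
        Int.ediv_eq_zero_of_lt (by omega) (by omega), zero_add]
    have f3 : (c + n - 1) * a / p = a - 2 := by
      have hx : (c + n - 1) * a = (p + b - a) + (a - 2) * p := by
        linear_combination -hb
      rw [hx, Int.add_mul_ediv_right _ _ (by omega : p ≠ 0),
        Int.ediv_eq_zero_of_lt (by omega) (by omega), zero_add]
    rw [f1, f2, f3] at h
    omega
end

section
/- Let p be an odd prime, ℓ a positive integer not divisible by p, and let a be the remainder of ℓ modulo p. Define ν_i := ⌊(a + iℓ)/p⌋ for 0 ≤ i ≤ p−1 and n_i := min{ν_{i+j} − ν_j : 0 ≤ j ≤ p−1−i} for 0 ≤ i ≤ p−1. Then n_i = ν_i for every 0 ≤ i ≤ p−1 if and only if a divides p−1. -/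
/-!
Writing `ℓ = p q + a` gives `ν i = i q + ⌊a (i + 1) / p⌋`, and since `ν 0 = 0` the condition
`n_i = ν_i` for all `i` says that `ν` is superadditive on `[0, p - 1]`. Carrying the remainders,
this means `a ≤ (a s mod p) + (a t mod p)` whenever `s, t ≥ 1` and `s + t ≤ p + 1`.

If `p - 1 = a m`, a remainder `c = a s mod p` below `a` pins down `s = p - c m`, so two remainders
adding up to less than `a` would force `s + t ≥ 2 p - (a - 1) m > p + 1`. If `a ∤ p - 1`, write
`p - 1 = a m + b` with `0 < b < a - 1`; then the inverse `s` of `a` modulo `p` and `t = p - m - s`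
have remainders `1` and `b`.
-/

namespace Nat

theorem div_add_div_le_div_iff_le_mod_add_mod {x y z c p : ℕ} (hp : 0 < p) (h : x + y = z + c) :
    x / p + y / p ≤ z / p ↔ c ≤ x % p + y % p := by
  rw [Nat.le_div_iff_mul_le hp, add_mul]
  have := Nat.div_add_mod' x p
  have := Nat.div_add_mod' y p
  omega

theorem add_mul_mod_mul_eq_of_mul_add_one_eq {a m p s : ℕ} (hm : a * m + 1 = p) (hs : 1 ≤ s)
    (hsp : s ≤ p) (hc : a * s % p < a) : s + a * s % p * m = p := by
  have hdiv := Nat.div_add_mod (a * s) p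
  set c := a * s % p
  set k := a * s / p
  have hcm : c * m + m ≤ a * m := by
    rw [← add_one_mul]
    exact Nat.mul_le_mul_right m hc
  have hdivℤ : (p * k + c : ℤ) = a * s := by exact_mod_cast hdiv
  have hmℤ : (a * m + 1 : ℤ) = p := by exact_mod_cast hm
  have hcmℤ : (c * m + m : ℤ) ≤ a * m := by exact_mod_cast hcm
  have hdvd : (p : ℤ) ∣ p - s - c * m :=
    ⟨1 - s + k * m, by linear_combination (-(m : ℤ)) * hdivℤ - (s : ℤ) * hmℤ⟩
  have := Int.eq_zero_of_abs_lt_dvd hdvd (by rw [abs_lt]; constructor <;> nlinarith)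
  have : (s + c * m : ℤ) = p := by linarith
  exact_mod_cast this

theorem le_mul_mod_add_mul_mod_of_mul_add_one_eq {a m p s t : ℕ} (hm : a * m + 1 = p)
    (hp : 1 < p) (hs : 1 ≤ s) (ht : 1 ≤ t) (hst : s + t ≤ p + 1) :
    a ≤ a * s % p + a * t % p := by
  by_contra! h
  have hs' := add_mul_mod_mul_eq_of_mul_add_one_eq hm hs (by omega) (by omega)
  have ht' := add_mul_mod_mul_eq_of_mul_add_one_eq hm ht (by omega) (by omega)
  have hm0 : 0 < m := Nat.pos_of_ne_zero (by rintro rfl; omega)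
  have : a * m ≤ (a * s % p + a * t % p) * m := by rw [add_mul]; omega
  have := Nat.le_of_mul_le_mul_right this hm0
  omega

theorem exists_mul_mod_add_mul_mod_lt_of_not_dvd {a p : ℕ} (hcop : a.Coprime p) (hap : a < p)
    (hdvd : ¬ a ∣ p - 1) :
    ∃ s t, 1 ≤ s ∧ 1 ≤ t ∧ s + t ≤ p + 1 ∧ a * s % p + a * t % p < a := by
  have ha : 1 < a := by
    rcases Nat.lt_trichotomy a 1 with h | rfl | h
    · obtain rfl : a = 0 := by omega
      obtain rfl : p = 1 := Nat.coprime_zero_left p |>.mp hcop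
      exact absurd (dvd_refl 0) hdvd
    · exact absurd (one_dvd _) hdvd
    · exact h
  obtain ⟨s, hsp, hs⟩ := Nat.exists_mul_mod_eq_one_of_coprime hcop (by omega)
  have hs0 : 1 ≤ s := Nat.pos_of_ne_zero (by rintro rfl; simp at hs)
  obtain ⟨k, hdiv⟩ : ∃ k, p * k + 1 = a * s := ⟨_, hs ▸ Nat.div_add_mod (a * s) p⟩
  -- `k = a - 1` would give `a (p - s) = p - 1`
  have hk : k + 2 ≤ a := by
    have hka : k < a := Nat.lt_of_mul_lt_mul_left (a := p) (by nlinarith)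
    refine (Nat.lt_or_ge (k + 1) a).elim (fun h => h) fun h => absurd ⟨p - s, ?_⟩ hdvd
    obtain rfl : k = a - 1 := by omega
    zify [hsp.le, (by omega : 1 ≤ p), (by omega : 1 ≤ a)] at hdiv ⊢
    linear_combination -hdiv
  obtain ⟨m, b, hpm, hb0, hba⟩ : ∃ m b, a * m + b + 1 = p ∧ 0 < b ∧ b + 1 < a := by
    refine ⟨(p - 1) / a, (p - 1) % a, ?_, ?_, ?_⟩
    · have := Nat.div_add_mod (p - 1) a
      omega
    · exact Nat.pos_of_ne_zero fun h => hdvd (Nat.dvd_of_mod_eq_zero h)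
    · have := Nat.div_add_mod (p - 1) a
      have := Nat.mod_lt (p - 1) (by omega : 0 < a)
      refine (Nat.lt_or_ge _ a).elim id fun h => ?_
      have := Nat.Coprime.eq_one_of_dvd hcop ⟨(p - 1) / a + 1, by rw [mul_add]; omega⟩
      omega
  have hsm : s + m < p := by
    have : a * (s + m + 1) < a * p := by nlinarith
    have := Nat.lt_of_mul_lt_mul_left this
    omega
  have ht : a * (p - (s + m)) = p * (a - (k + 1)) + b := by
    zify [hsm.le, (by omega : k + 1 ≤ a)] at hdiv hpm ⊢
    linear_combination hdiv - hpm
  refine ⟨s, p - (s + m), hs0, by omega, by omega, ?_⟩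
  rw [hs, ht, Nat.mul_add_mod, Nat.mod_eq_of_lt (by omega)]
  omega

theorem le_mul_succ_mod_add_mul_succ_mod_iff_dvd {a p : ℕ} (hp : 1 < p) (hcop : a.Coprime p)
    (hap : a < p) :
    (∀ i j, i + j ≤ p - 1 → a ≤ a * (i + 1) % p + a * (j + 1) % p) ↔ a ∣ p - 1 := by
  constructor
  · intro h
    by_contra hdvd
    obtain ⟨s, t, hs, ht, hst, hlt⟩ := exists_mul_mod_add_mul_mod_lt_of_not_dvd hcop hap hdvd
    have := h (s - 1) (t - 1) (by omega)
    rw [Nat.sub_add_cancel hs, Nat.sub_add_cancel ht] at this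
    omega
  · rintro ⟨m, hm⟩ i j hij
    exact le_mul_mod_add_mul_mod_of_mul_add_one_eq (m := m) (by omega) hp (by omega) (by omega)
      (by omega)

end Nat

theorem floor_mod_add_mul_div_eq {K : Type*} [Field K] [LinearOrder K] [IsStrictOrderedRing K]
    [FloorRing K] {ℓ p : ℕ} (hp : 0 < p) (i : ℕ) :
    ⌊((ℓ % p + i * ℓ : ℕ) : K) / p⌋ = (i * (ℓ / p) + ℓ % p * (i + 1) / p : ℕ) := by
  have hsplit : ℓ % p + i * ℓ = ℓ % p * (i + 1) + i * (ℓ / p) * p := by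
    nth_rw 2 [← Nat.div_add_mod ℓ p]
    ring
  rw [← Int.natCast_floor_eq_floor (by positivity), Nat.floor_div_eq_div, hsplit,
    Nat.add_mul_div_right _ _ hp, add_comm]

theorem forall_isLeast_eq_iff_le_sub {α : Type*} [AddGroup α] [PartialOrder α] {N : ℕ}
    {ν nn : ℕ → α} (hν0 : ν 0 = 0)
    (hnn : ∀ i ≤ N, IsLeast {d | ∃ j ≤ N - i, d = ν (i + j) - ν j} (nn i)) :
    (∀ i ≤ N, nn i = ν i) ↔ ∀ i j, i + j ≤ N → ν i ≤ ν (i + j) - ν j := by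
  constructor
  · intro h i j hij
    rw [← h i (by omega)]
    exact (hnn i (by omega)).2 ⟨j, by omega, rfl⟩
  · intro h i hi
    refine (hnn i hi).unique ⟨⟨0, Nat.zero_le _, by simp [hν0]⟩, ?_⟩
    rintro _ ⟨j, hj, rfl⟩
    exact h i j (by omega)

theorem statement6_general
    (p : ℕ) (hp : p.Prime)
    (ℓ : ℕ) (hpℓ : ¬ p ∣ ℓ)
    (a : ℕ) (ha : a = ℓ % p)
    (ν : ℕ → ℤ) (hν : ∀ i, ν i = ⌊((a + i * ℓ : ℕ) : ℝ) / (p : ℝ)⌋)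
    (nn : ℕ → ℤ)
    (hnn : ∀ i, i ≤ p - 1 →
      IsLeast {d : ℤ | ∃ j : ℕ, j ≤ p - 1 - i ∧ d = ν (i + j) - ν j} (nn i)) :
    (∀ i, i ≤ p - 1 → nn i = ν i) ↔ a ∣ p - 1 := by
  have hp0 := hp.pos
  have ha0 : 0 < a := ha ▸ Nat.pos_of_ne_zero fun h => hpℓ (Nat.dvd_of_mod_eq_zero h)
  have hap : a < p := ha ▸ Nat.mod_lt ℓ hp0
  have hcop : a.Coprime p :=
    (hp.coprime_iff_not_dvd.2 fun h => (Nat.le_of_dvd ha0 h).not_gt hap).symm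
  have hνq : ∀ i, ν i = (i * (ℓ / p) + a * (i + 1) / p : ℕ) := fun i => by
    rw [hν, ha, floor_mod_add_mul_div_eq hp0]
  have hν0 : ν 0 = 0 := by simp [hνq, Nat.div_eq_of_lt hap]
  rw [forall_isLeast_eq_iff_le_sub hν0 hnn,
    ← Nat.le_mul_succ_mod_add_mul_succ_mod_iff_dvd hp.one_lt hcop hap]
  refine forall₂_congr fun i j => imp_congr_right fun _ => ?_
  rw [← Nat.div_add_div_le_div_iff_le_mod_add_mod hp0 (z := a * (i + j + 1)) (by ring),
    hνq, hνq, hνq, le_sub_iff_add_le, ← Nat.cast_add, Nat.cast_le, add_mul]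
  omega

/-- For an odd prime `p`, a positive integer `ℓ` not divisible by `p`, with
`a` the remainder of `ℓ` mod `p`, `ν_i = ⌊(a + iℓ)/p⌋` and
`n_i = min { ν_{i+j} - ν_j : 0 ≤ j ≤ p-1-i }`, one has `n_i = ν_i` for all
`0 ≤ i ≤ p-1` if and only if `a ∣ p - 1`. -/
theorem statement6
    (p : ℕ) (hp : p.Prime) (hodd : Odd p)
    (ℓ : ℕ) (hℓ : 0 < ℓ) (hpℓ : ¬ p ∣ ℓ)
    (a : ℕ) (ha : a = ℓ % p)
    (ν : ℕ → ℤ) (hν : ∀ i, ν i = ⌊((a + i * ℓ : ℕ) : ℝ) / (p : ℝ)⌋)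
    (nn : ℕ → ℤ)
    (hnn : ∀ i, i ≤ p - 1 →
      IsLeast {d : ℤ | ∃ j : ℕ, j ≤ p - 1 - i ∧ d = ν (i + j) - ν j} (nn i)) :
    (∀ i, i ≤ p - 1 → nn i = ν i) ↔ a ∣ p - 1 :=
  statement6_general p hp ℓ hpℓ a ha ν hν nn hnn
end

section
/- Let p be an odd prime, ℓ a positive integer not divisible by p, a the remainder of ℓ modulo p, and ν_i := ⌊(a + iℓ)/p⌋ for 0 ≤ i ≤ p−1. Then ν_{p−1} = a + (p−1)⌊ℓ/p⌋, and for all integers i, j with 0 ≤ i, j ≤ p−1 and i + j ≥ p, one has ν_i + ν_j ≤ ν_{p−1} + ν_{i+j+1−p}. -/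
theorem Int.floor_natCast_div_natCast {K : Type*} [Field K] [LinearOrder K] [IsStrictOrderedRing K]
    [FloorRing K] (m n : ℕ) : ⌊(m : K) / n⌋ = ((m / n : ℕ) : ℤ) := by
  rw [Int.floor_div_natCast, Int.floor_natCast]
  norm_cast

theorem Nat.div_add_div_le_div_add_div_of_dvd {n x y z w : ℕ} (hx : n ∣ x) (h : y + z = x + w) :
    y / n + z / n ≤ x / n + w / n :=
  calc y / n + z / n ≤ (y + z) / n := Nat.div_add_div_le_add_div
    _ = x / n + w / n := by rw [h, Nat.add_div_of_dvd_right hx]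

theorem Nat.mod_add_pred_mul_eq {n : ℕ} (hn : 0 < n) (ℓ : ℕ) :
    ℓ % n + (n - 1) * ℓ = n * (ℓ % n + (n - 1) * (ℓ / n)) := by
  obtain ⟨m, rfl⟩ := Nat.exists_eq_add_of_lt hn
  nth_rewrite 2 [← Nat.div_add_mod ℓ (0 + m + 1)]
  simp only [zero_add, Nat.add_sub_cancel]
  ring

theorem statement7_general
    (p : ℕ) (hodd : Odd p)
    (ℓ : ℕ)
    (a : ℕ) (ha : a = ℓ % p)
    (ν : ℕ → ℤ) (hν : ∀ i, ν i = ⌊((a + i * ℓ : ℕ) : ℝ) / (p : ℝ)⌋) :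
    ν (p - 1) = (a : ℤ) + ((p : ℤ) - 1) * ⌊(ℓ : ℝ) / (p : ℝ)⌋ ∧
      ∀ i j : ℕ, i ≤ p - 1 → j ≤ p - 1 → p ≤ i + j →
        ν i + ν j ≤ ν (p - 1) + ν (i + j + 1 - p) := by
  have hp : 0 < p := hodd.pos
  have hν_div : ∀ i, ν i = ((a + i * ℓ) / p : ℕ) := fun i => by
    rw [hν, Int.floor_natCast_div_natCast]
  -- `a + (p - 1) ℓ ≡ a - ℓ ≡ 0 [MOD p]`, so `ν (p - 1)` involves no rounding.
  have hlast : a + (p - 1) * ℓ = p * (a + (p - 1) * (ℓ / p)) := ha ▸ Nat.mod_add_pred_mul_eq hp ℓ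
  have hν_last : ν (p - 1) = (a + (p - 1) * (ℓ / p) : ℕ) := by
    rw [hν_div, hlast, Nat.mul_div_cancel_left _ hp]
  refine ⟨?_, fun i j _ _ hij => ?_⟩
  · rw [hν_last, Int.floor_natCast_div_natCast]
    push_cast [Nat.one_le_iff_ne_zero.mpr hp.ne']
    ring
  · have hsum : (a + i * ℓ) + (a + j * ℓ) = (a + (p - 1) * ℓ) + (a + (i + j + 1 - p) * ℓ) := by
      have h : i + j = (p - 1) + (i + j + 1 - p) := by omega
      linear_combination ℓ * h
    simp only [hν_div]
    exact_mod_cast Nat.div_add_div_le_div_add_div_of_dvd ⟨_, hlast⟩ hsum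

/-- For an odd prime `p`, a positive integer `ℓ` not divisible by `p`, with
`a` the remainder of `ℓ` mod `p` and `ν_i = ⌊(a + iℓ)/p⌋`, one has
`ν_{p-1} = a + (p-1)·⌊ℓ/p⌋`, and for all `0 ≤ i, j ≤ p-1` with `i + j ≥ p`,
`ν_i + ν_j ≤ ν_{p-1} + ν_{i+j+1-p}`. -/
theorem statement7
    (p : ℕ) (hp : p.Prime) (hodd : Odd p)
    (ℓ : ℕ) (hℓ : 0 < ℓ) (hpℓ : ¬ p ∣ ℓ)
    (a : ℕ) (ha : a = ℓ % p)
    (ν : ℕ → ℤ) (hν : ∀ i, ν i = ⌊((a + i * ℓ : ℕ) : ℝ) / (p : ℝ)⌋) :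
    ν (p - 1) = (a : ℤ) + ((p : ℤ) - 1) * ⌊(ℓ : ℝ) / (p : ℝ)⌋ ∧
      ∀ i j : ℕ, i ≤ p - 1 → j ≤ p - 1 → p ≤ i + j →
        ν i + ν j ≤ ν (p - 1) + ν (i + j + 1 - p) :=
  statement7_general p hodd ℓ a ha ν hν
end

section
/- Let p be an odd prime, ℓ a positive integer not divisible by p, a the remainder of ℓ modulo p, and a_0 := ⌊ℓ/p⌋. Define ν_i := ⌊(a + iℓ)/p⌋ for 0 ≤ i ≤ p−1, n_i := min{ν_{i+j} − ν_j : 0 ≤ j ≤ p−1−i}, and E := {h ∈ ℤ : 1 ≤ h < p and for every integer h' with 1 ≤ h' < h the fractional part of h'·a/p is strictly greater than the fractional part of h·a/p}. Then for every 0 ≤ i ≤ p−1, n_i = i·a_0 + ⌊i·a/p⌋ + ε, where ε = 1 if p − i ∈ E and ε = 0 if p − i ∉ E. -/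
private lemma fl_aux (n : ℤ) (d : ℕ) : ⌊(n : ℝ) / (d : ℝ)⌋ = n / d := by
  rw [← Rat.floor_intCast_div_natCast n d, ← Rat.floor_cast (α := ℝ)]
  congr 1
  push_cast
  ring

private lemma split_div_aux (p x y : ℤ) (hp : 0 < p) :
    (x + y) / p = x / p + y / p + (x % p + y % p) / p := by
  conv_lhs => rw [← Int.mul_ediv_add_emod x p, ← Int.mul_ediv_add_emod y p]
  rw [show p * (x / p) + x % p + (p * (y / p) + y % p)
      = x % p + y % p + (x / p + y / p) * p by ring,
    Int.add_mul_ediv_right _ _ hp.ne']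
  ring

private lemma cval_aux (p s : ℤ) (hp : 0 < p) (h0 : 0 ≤ s) (h2 : s < 2 * p) :
    s / p = if s < p then 0 else 1 := by
  split
  · exact Int.ediv_eq_zero_of_lt h0 ‹_›
  · rw [show s = (s - p) + 1 * p by ring, Int.add_mul_ediv_right _ _ hp.ne',
      Int.ediv_eq_zero_of_lt (by omega) (by omega)]
    omega

private lemma ndvd_aux (p z : ℤ) (h0 : 0 < z) (h1 : z < p) : ¬ p ∣ z := fun hd =>
  absurd (Int.le_of_dvd h0 hd) (by omega)

/-- Lemma 7.3: with `p` an odd prime, `ℓ` a positive integer not divisible by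
`p`, `a = ℓ mod p`, `a_0 = ⌊ℓ/p⌋`, `ν_i = ⌊(a + iℓ)/p⌋`,
`n_i = min { ν_{i+j} - ν_j : 0 ≤ j ≤ p-1-i }`, and
`E = { h : 1 ≤ h < p, and the fractional part of h'·a/p is > that of h·a/p
for every 1 ≤ h' < h }`, one has `n_i = i·a_0 + ⌊i·a/p⌋ + ε`, where `ε = 1`
if `p - i ∈ E` and `ε = 0` otherwise. -/
theorem statement10
    (p : ℕ) (hp : p.Prime) (hodd : Odd p)
    (ℓ : ℕ) (hℓ : 0 < ℓ) (hpℓ : ¬ p ∣ ℓ)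
    (a a₀ : ℕ) (ha : a = ℓ % p) (ha₀ : a₀ = ℓ / p)
    (ν : ℕ → ℤ) (hν : ∀ i, ν i = ⌊((a + i * ℓ : ℕ) : ℝ) / (p : ℝ)⌋)
    (nn : ℕ → ℤ)
    (hnn : ∀ i, i ≤ p - 1 →
      IsLeast {d : ℤ | ∃ j : ℕ, j ≤ p - 1 - i ∧ d = ν (i + j) - ν j} (nn i))
    (E : Set ℤ)
    (hE : E = {h : ℤ | 1 ≤ h ∧ h < (p : ℤ) ∧ ∀ h' : ℤ, 1 ≤ h' → h' < h →
        Int.fract ((h : ℝ) * (a : ℝ) / (p : ℝ)) < Int.fract ((h' : ℝ) * (a : ℝ) / (p : ℝ))}) :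
    ∀ i : ℕ, i ≤ p - 1 →
      (((p : ℤ) - (i : ℤ)) ∈ E →
          nn i = (i : ℤ) * (a₀ : ℤ) + ⌊((i * a : ℕ) : ℝ) / (p : ℝ)⌋ + 1) ∧
      (((p : ℤ) - (i : ℤ)) ∉ E →
          nn i = (i : ℤ) * (a₀ : ℤ) + ⌊((i * a : ℕ) : ℝ) / (p : ℝ)⌋) := by
  have hp0 : 0 < p := hp.pos
  have hp2 : 2 ≤ p := hp.two_le
  have hP0 : (0 : ℤ) < (p : ℤ) := by exact_mod_cast hp0
  have hPR : (0 : ℝ) < (p : ℝ) := by exact_mod_cast hp0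
  have hPprime : Prime ((p : ℕ) : ℤ) := Nat.prime_iff_prime_int.mp hp
  have ha1 : 0 < a := by
    rcases Nat.eq_zero_or_pos a with h | h
    · exact absurd (Nat.dvd_of_mod_eq_zero (ha ▸ h)) hpℓ
    · exact h
  have hap : a < p := ha ▸ Nat.mod_lt ℓ hp0
  have hpa : ¬ ((p : ℤ) ∣ (a : ℤ)) :=
    ndvd_aux _ _ (by exact_mod_cast ha1) (by exact_mod_cast hap)
  have hl : (ℓ : ℤ) = p * a₀ + a := by
    have h := Nat.div_add_mod ℓ p
    rw [← ha, ← ha₀] at h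
    exact_mod_cast (by omega : ℓ = p * a₀ + a)
  -- integer form of ν
  have hν' : ∀ m : ℕ, ν m = m * a₀ + (((m : ℤ) + 1) * a) / p := by
    intro m
    have hcast : ((a + m * ℓ : ℕ) : ℝ) = ((((a : ℤ) + m * ℓ) : ℤ) : ℝ) := by push_cast; ring
    rw [hν m, hcast, fl_aux,
      show (a : ℤ) + m * ℓ = ((m : ℤ) + 1) * a + (m * a₀) * p by rw [hl]; ring,
      Int.add_mul_ediv_right _ _ hP0.ne']
    ring
  -- the floor on the RHS in integer form
  have hfloor : ∀ i : ℕ, ⌊((i * a : ℕ) : ℝ) / (p : ℝ)⌋ = ((i : ℤ) * a) / p := by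
    intro i
    have hcast : ((i * a : ℕ) : ℝ) = ((((i : ℤ) * a) : ℤ) : ℝ) := by push_cast; ring
    rw [hcast, fl_aux]
  -- fractional parts in integer form
  have hfr : ∀ h : ℤ, Int.fract ((h : ℝ) * (a : ℝ) / (p : ℝ)) = ((h * a % p : ℤ) : ℝ) / p := by
    intro h
    have hcast : (h : ℝ) * (a : ℝ) / (p : ℝ) = (((h * (a : ℤ)) : ℤ) : ℝ) / ((p : ℕ) : ℝ) := by
      push_cast; ring
    rw [hcast, Int.fract_div_intCast_eq_div_intCast_mod]
  have hfrlt : ∀ g h : ℤ,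
      (Int.fract ((g : ℝ) * (a : ℝ) / (p : ℝ)) < Int.fract ((h : ℝ) * (a : ℝ) / (p : ℝ))
        ↔ g * a % p < h * a % p) := by
    intro g h
    rw [hfr, hfr, div_lt_div_iff₀ hPR hPR]
    constructor
    · intro hlt
      have : ((g * a % p : ℤ) : ℝ) < ((h * a % p : ℤ) : ℝ) := by
        have := mul_lt_mul_of_pos_right (lt_of_mul_lt_mul_right hlt (le_of_lt hPR)) hPR
        exact lt_of_mul_lt_mul_right hlt (le_of_lt hPR)
      exact_mod_cast this
    · intro hlt
      have : ((g * a % p : ℤ) : ℝ) < ((h * a % p : ℤ) : ℝ) := by exact_mod_cast hlt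
      exact mul_lt_mul_of_pos_right this hPR
  -- distinctness of residues
  have hdist : ∀ g h : ℤ, 1 ≤ g → g < p → 1 ≤ h → h < p → g ≠ h →
      g * a % p ≠ h * a % p := by
    intro g h hg1 hgp hh1 hhp hne heq
    have : (g * a - h * a) % (p : ℤ) = 0 := by
      rw [Int.sub_emod, heq, sub_self, Int.zero_emod]
    have hdvd : (p : ℤ) ∣ (g - h) * a := by
      have := Int.dvd_of_emod_eq_zero this
      rwa [show g * a - h * a = (g - h) * a by ring] at this
    rcases hPprime.dvd_mul.mp hdvd with hd | hd
    · rcases lt_or_gt_of_ne (sub_ne_zero.mpr hne) with hlt | hgt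
      · have := Int.le_of_dvd (by omega) (dvd_neg.mpr hd)
        omega
      · have := Int.le_of_dvd (by omega) hd
        omega
    · exact hpa hd
  intro i hi
  -- difference formula
  have hdiff : ∀ j : ℕ, ν (i + j) - ν j
      = i * a₀ + ((i : ℤ) * a) / p + ((((j : ℤ) + 1) * a % p + ((i : ℤ) * a) % p) / p) := by
    intro j
    have hsplit := split_div_aux p (((j : ℤ) + 1) * a) ((i : ℤ) * a) hP0
    have e : (((i + j : ℕ) : ℤ) + 1) * a = ((j : ℤ) + 1) * a + (i : ℤ) * a := by
      push_cast; ring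
    rw [hν' (i + j), hν' j, e, hsplit]
    push_cast
    ring
  rcases Nat.eq_zero_or_pos i with rfl | hi1
  · -- i = 0
    have hnotE : ((p : ℤ) - (0 : ℕ)) ∉ E := by
      rw [hE]
      intro hmem
      have := hmem.2.1
      simp at this
    refine ⟨fun hmem => absurd hmem hnotE, fun _ => ?_⟩
    have h0 : nn 0 = 0 := by
      refine (hnn 0 (by omega)).unique ⟨⟨0, by omega, by simp⟩, ?_⟩
      rintro d ⟨j, -, rfl⟩
      simp
    rw [h0, hfloor]
    simp
  · -- 1 ≤ i
    have hip : i < p := by omega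
    have hiP : (i : ℤ) < p := by exact_mod_cast hip
    have hi1' : (1 : ℤ) ≤ (i : ℤ) := by exact_mod_cast hi1
    set r : ℤ := ((i : ℤ) * a) % p with hr
    have hr0 : 0 ≤ r := Int.emod_nonneg _ hP0.ne'
    have hrp : r < p := Int.emod_lt_of_pos _ hP0
    have hrne : r ≠ 0 := by
      intro h0
      rcases hPprime.dvd_mul.mp (Int.dvd_of_emod_eq_zero h0) with hd | hd
      · exact ndvd_aux _ _ (by omega) hiP hd
      · exact hpa hd
    -- residue of (p - i) * a
    have hs : ((p : ℤ) - i) * a % p = p - r := by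
      have hx := Int.mul_ediv_add_emod (((p : ℤ) - i) * a) p
      have hy := Int.mul_ediv_add_emod ((i : ℤ) * a) p
      have hdvd : (p : ℤ) ∣ (((p : ℤ) - i) * a % p + ((i : ℤ) * a) % p) :=
        ⟨(a : ℤ) - ((p : ℤ) - i) * a / p - (i : ℤ) * a / p, by linear_combination hx + hy⟩
      have hb1 : 0 ≤ ((p : ℤ) - i) * a % p := Int.emod_nonneg _ hP0.ne'
      have hb2 : ((p : ℤ) - i) * a % p < p := Int.emod_lt_of_pos _ hP0
      obtain ⟨t, ht⟩ := hdvd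
      have hr0' : 0 < r := lt_of_le_of_ne hr0 (Ne.symm hrne)
      have h1 : 1 ≤ t := by
        by_contra hc
        push_neg at hc
        have := mul_nonpos_of_nonneg_of_nonpos hP0.le (by omega : t ≤ 0)
        linarith
      have h2 : t ≤ 1 := by
        by_contra hc
        push_neg at hc
        have := mul_le_mul_of_nonneg_left (by omega : (2:ℤ) ≤ t) hP0.le
        linarith
      have ht1 : t = 1 := le_antisymm h2 h1
      rw [ht1, mul_one] at ht
      omega
    -- value of each element of the set
    have hval : ∀ j : ℕ, ν (i + j) - ν j
        = i * a₀ + ((i : ℤ) * a) / p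
          + (if ((j : ℤ) + 1) * a % p < p - r then 0 else 1) := by
      intro j
      rw [hdiff j]
      congr 1
      have hb1 : 0 ≤ ((j : ℤ) + 1) * a % p := Int.emod_nonneg _ hP0.ne'
      have hb2 : ((j : ℤ) + 1) * a % p < p := Int.emod_lt_of_pos _ hP0
      rw [cval_aux p _ hP0 (by omega) (by omega)]
      by_cases hc : ((j : ℤ) + 1) * a % p < p - r
      · rw [if_pos hc, if_pos (by omega)]
      · rw [if_neg hc, if_neg (by omega)]
    constructor
    · -- p - i ∈ E
      intro hmem
      rw [hE] at hmem
      obtain ⟨-, -, hfor⟩ := hmem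
      rw [hfloor]
      refine ((hnn i hi).unique ⟨⟨p - 1 - i, le_refl _, ?_⟩, ?_⟩)
      · rw [hval]
        have hcast : ((p - 1 - i : ℕ) : ℤ) + 1 = (p : ℤ) - i := by omega
        rw [hcast, hs]
        simp
      · rintro d ⟨j, hj, rfl⟩
        rw [hval j]
        have hj' : (j : ℤ) ≤ (p : ℤ) - 1 - i := by
          have : (j : ℤ) ≤ ((p - 1 - i : ℕ) : ℤ) := by exact_mod_cast hj
          omega
        have hone : ¬ (((j : ℤ) + 1) * a % p < p - r) := by
          intro hlt
          rcases eq_or_lt_of_le (by omega : (j : ℤ) + 1 ≤ (p : ℤ) - i) with he | hlt'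
          · rw [he, hs] at hlt
            omega
          · have := hfor ((j : ℤ) + 1) (by omega) hlt'
            rw [hfrlt] at this
            rw [hs] at this
            omega
        rw [if_neg hone]
    · -- p - i ∉ E
      intro hmem
      rw [hE] at hmem
      have hex : ∃ h' : ℤ, 1 ≤ h' ∧ h' < (p : ℤ) - i ∧
          ¬ (Int.fract (((p : ℤ) - i : ℤ) * (a : ℝ) / (p : ℝ))
              < Int.fract ((h' : ℝ) * (a : ℝ) / (p : ℝ))) := by
        by_contra hc
        push_neg at hc
        exact hmem ⟨by omega, by omega, hc⟩
      obtain ⟨h', hh1, hh2, hnlt⟩ := hex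
      -- from ¬<, get strict < in residues for h'
      have hres : h' * a % p < p - r := by
        have hle : ¬ (((p : ℤ) - i) * a % p < h' * a % p) := by
          intro hlt
          exact hnlt ((hfrlt ((p : ℤ) - i) h').mpr hlt)
        have hne := hdist h' ((p : ℤ) - i) hh1 (by omega) (by omega) (by omega) (by omega)
        rw [hs] at hle hne
        omega
      rw [hfloor]
      refine ((hnn i hi).unique ⟨⟨(h' - 1).toNat, ?_, ?_⟩, ?_⟩)
      · omega
      · rw [hval]
        have hcast : (((h' - 1).toNat : ℕ) : ℤ) + 1 = h' := by omega
        rw [hcast, if_pos hres]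
        simp
      · rintro d ⟨j, hj, rfl⟩
        rw [hval j]
        split <;> omega
end

section
/- Let p be an odd prime and a an integer with 0 < a < p, and suppose the canonical continued fraction expansion a/p = [0; a_1, …, a_n] has length n ≥ 2. Define E := {h ∈ ℤ : 1 ≤ h < p and for every integer h' with 1 ≤ h' < h the fractional part of h'·a/p is strictly greater than the fractional part of h·a/p}. Then E = { r·q_{2i+1} + q_{2i} : i ∈ ℤ with 0 ≤ i < (n−1)/2, r ∈ ℤ with 0 ≤ r < a_{2i+2} if i ≠ (n−3)/2, and 0 ≤ r ≤ a_{2i+2} if i = (n−3)/2 }. -/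
private lemma aux_BA_core (dk dk1 qk qk1 g x y : ℤ)
    (hdk : 1 ≤ dk) (hdk1 : 1 ≤ dk1) (hqk : 1 ≤ qk) (hqk1 : 1 ≤ qk1)
    (hg1 : 1 ≤ g) (hg2 : g < qk1) (hgxy : g = x * qk1 + y * qk)
    (hgQ : g ≠ qk) : dk < |y * dk - x * dk1| := by
  rcases lt_trichotomy x 0 with hx0 | hx0 | hx0
  · have hy1 : 1 ≤ y := by nlinarith
    have hexpr : dk + dk1 ≤ y * dk - x * dk1 := by nlinarith
    rw [abs_of_nonneg (by linarith)]
    linarith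
  · rw [hx0] at hgxy
    have hgy : g = y * qk := by linarith
    have hy1 : 1 ≤ y := by nlinarith
    have hy2 : 2 ≤ y := by
      rcases eq_or_lt_of_le hy1 with h | h
      · exact absurd (by rw [hgy, ← h]; ring) hgQ
      · omega
    rw [hx0]
    have h0 : y * dk - 0 * dk1 = y * dk := by ring
    rw [h0, abs_of_nonneg (by nlinarith)]
    nlinarith
  · have hy1 : y ≤ -1 := by nlinarith
    have hexpr : y * dk - x * dk1 ≤ -dk - dk1 := by nlinarith
    rw [abs_of_nonpos (by linarith)]
    linarith

private lemma aux_gapA (p dk dk1 r qk qk1 : ℤ) (hiden : qk1 * dk + qk * dk1 = p)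
    (hdk : 1 ≤ dk) (hdk1 : 1 ≤ dk1) (hqk : 1 ≤ qk) (hqk1 : 2 ≤ qk1) (hr : 0 ≤ r) :
    dk < p - (dk - r * dk1) := by nlinarith

private lemma aux_gapB (p dk dk1 r w : ℤ) (hba : dk < p - w) (hr : 0 ≤ r)
    (hdk1 : 0 ≤ dk1) : w < p - (dk - r * dk1) := by nlinarith

private lemma aux_vlb1 (dk dk1 dk2 aj r : ℤ) (hrec : dk = aj * dk1 + dk2)
    (hd1 : 1 ≤ dk1) (hd2 : 0 ≤ dk2) (hr : r + 1 ≤ aj) : 1 ≤ dk - r * dk1 := by nlinarith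

private lemma aux_vlb2 (dk dk1 aj r : ℤ) (hrec : dk = aj * dk1 + 1)
    (hd1 : 0 ≤ dk1) (hr : r ≤ aj) : 1 ≤ dk - r * dk1 := by nlinarith

private lemma aux_vub (dk dk1 r : ℤ) (hr : 0 ≤ r) (h1 : 0 ≤ dk1) :
    dk - r * dk1 ≤ dk := by nlinarith

private lemma aux_M1a (dk dk1 dj dj1 dj2 aj r r' : ℤ) (hrec : dj = aj * dj1 + dj2)
    (hmono : dk ≤ dj2) (hdj1 : 1 ≤ dj1) (hr : 0 ≤ r) (hdk1 : 0 ≤ dk1)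
    (hr' : r' + 1 ≤ aj) : dk - r * dk1 < dj - r' * dj1 := by
  nlinarith [mul_nonneg hr hdk1,
    mul_nonneg (by linarith : (0:ℤ) ≤ aj - 1 - r') (by linarith : (0:ℤ) ≤ dj1)]

private lemma aux_M1c (dk dk1 r r' : ℤ) (h : r' + 1 ≤ r) (hd : 1 ≤ dk1) :
    dk - r * dk1 < dk - r' * dk1 := by nlinarith

private lemma aux_common1 (q r g X a' : ℤ) (h1 : q * r + g = X) (h2 : 0 ≤ g)
    (h3 : X < a' * q) (hq : 0 < q) : r < a' := by nlinarith

set_option maxHeartbeats 2000000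


/-- Proposition 7.4: for the canonical continued fraction expansion
`a/p = [0; a_1, …, a_n]` of length `n ≥ 2` with convergent denominators `q_k`,
the set `E = { h : 1 ≤ h < p, and the fractional part of h'·a/p is > that of
h·a/p for every 1 ≤ h' < h }` equals
`{ r·q_{2i+1} + q_{2i} : 0 ≤ i < (n-1)/2, 0 ≤ r < a_{2i+2} if i ≠ (n-3)/2,
0 ≤ r ≤ a_{2i+2} if i = (n-3)/2 }`. -/
theorem statement11
    (p a : ℤ) (hp : Prime p) (hodd : Odd p) (ha : 0 < a) (hap : a < p)
    (n : ℕ) (hn2 : 2 ≤ n) (A P Q : ℕ → ℤ)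
    -- canonical continued fraction expansion a/p = [0; A 1, …, A n]
    (hA : ∀ k, 1 ≤ k → k ≤ n → 1 ≤ A k) (hAn : 2 ≤ A n)
    -- denominators of the convergents
    (hQ0 : Q 0 = 1) (hQ1 : Q 1 = A 1)
    (hQrec : ∀ k, k + 2 ≤ n → Q (k + 2) = A (k + 2) * Q (k + 1) + Q k)
    -- numerators of the convergents
    (hP0 : P 0 = 0) (hP1 : P 1 = 1)
    (hPrec : ∀ k, k + 2 ≤ n → P (k + 2) = A (k + 2) * P (k + 1) + P k)
    -- the n-th convergent is a/p in lowest terms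
    (hQn : Q n = p) (hPn : P n = a)
    (E : Set ℤ)
    (hE : E = {h : ℤ | 1 ≤ h ∧ h < p ∧ ∀ h' : ℤ, 1 ≤ h' → h' < h →
        Int.fract ((h : ℝ) * (a : ℝ) / (p : ℝ)) < Int.fract ((h' : ℝ) * (a : ℝ) / (p : ℝ))}) :
    E = {x : ℤ | ∃ i : ℕ, ∃ s : ℤ,
        (i : ℚ) < ((n : ℚ) - 1) / 2 ∧ 0 ≤ s ∧
        ((i : ℚ) ≠ ((n : ℚ) - 3) / 2 → s < A (2 * i + 2)) ∧
        ((i : ℚ) = ((n : ℚ) - 3) / 2 → s ≤ A (2 * i + 2)) ∧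
        x = s * Q (2 * i + 1) + Q (2 * i)} := by
  have hp0 : (0:ℤ) < p := ha.trans hap
  have hpR : (0:ℝ) < (p:ℝ) := by exact_mod_cast hp0
  have hpa : ¬ (p ∣ a) := fun hdvd => absurd (Int.le_of_dvd ha hdvd) (not_le.mpr hap)
  obtain ⟨d, hd⟩ : ∃ d : ℕ → ℤ, ∀ k, d k = (-1:ℤ)^k * (Q k * a - P k * p) :=
    ⟨_, fun _ => rfl⟩
  have hsq : ∀ k : ℕ, (-1:ℤ)^k * (-1:ℤ)^k = 1 := by
    intro k; rw [← pow_add]; exact Even.neg_one_pow ⟨k, rfl⟩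
  have hev : ∀ i : ℕ, (-1:ℤ)^(2*i) = 1 := by
    intro i; rw [pow_mul]; norm_num
  -- Q positivity
  have hQpos : ∀ k, k ≤ n → 1 ≤ Q k := by
    intro k
    induction k using Nat.strong_induction_on with
    | _ k ih =>
      intro hk
      rcases k with _ | _ | k
      · rw [hQ0]
      · rw [hQ1]; exact hA 1 (by omega) (by omega)
      · rw [hQrec k hk]
        have h1 := ih (k+1) (by omega) (by omega)
        have h0 := ih k (by omega) (by omega)
        have h2 := hA (k+2) (by omega) hk
        nlinarith
  have hQmono1 : ∀ k, k + 1 ≤ n → Q k ≤ Q (k+1) := by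
    intro k hk
    rcases k with _ | k
    · rw [hQ0, hQ1]; exact hA 1 (by omega) (by omega)
    · rw [hQrec k hk]
      have h1 := hQpos (k+1) (by omega)
      have h0 := hQpos k (by omega)
      have h2 := hA (k+2) (by omega) hk
      nlinarith
  have hQle : ∀ k l, k ≤ l → l ≤ n → Q k ≤ Q l := by
    intro k l hkl
    induction l, hkl using Nat.le_induction with
    | base => intro _; exact le_rfl
    | succ l hl ih => intro hln; exact (ih (by omega)).trans (hQmono1 l (by omega))
  have hQltp : ∀ k, k + 1 = n → Q k < p := by
    intro k hk
    obtain ⟨m, rfl⟩ : ∃ m, k = m + 1 := ⟨k - 1, by omega⟩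
    have e := hQrec m (by omega)
    have hmn : m + 2 = n := by omega
    rw [hmn, hQn] at e
    have h1 := hQpos (m+1) (by omega)
    have h0 := hQpos m (by omega)
    have h2 : 2 ≤ A n := hAn
    nlinarith
  -- determinant
  have hdet : ∀ k, k + 1 ≤ n → P (k+1) * Q k - P k * Q (k+1) = (-1:ℤ)^k := by
    intro k
    induction k with
    | zero => intro _; rw [hP0, hP1, hQ0, hQ1]; ring
    | succ k ih =>
      intro hk
      have e := ih (by omega)
      have eQ := hQrec k hk
      have eP := hPrec k hk
      have : (-1:ℤ)^(k+1) = -(-1:ℤ)^k := by rw [pow_succ]; ring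
      rw [this]
      linear_combination (Q (k+1)) * eP - (P (k+1)) * eQ - e
  have hδn0 : d n = 0 := by simp only [hd]; rw [hQn, hPn]; ring
  have hδeq1 : ∀ k, k + 1 = n → d k = 1 := by
    intro k hk
    subst hk
    have e := hdet k le_rfl
    rw [hQn, hPn] at e
    simp only [hd]
    linear_combination ((-1:ℤ)^k) * e + hsq k
  have hδrec : ∀ k, k + 2 ≤ n → d k = A (k+2) * d (k+1) + d (k+2) := by
    intro k hk
    simp only [hd]
    linear_combination (-(-1:ℤ)^k * a) * hQrec k hk + ((-1:ℤ)^k * p) * hPrec k hk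
  have hδpos : ∀ j k, k + j + 1 = n → 1 ≤ d k := by
    intro j
    induction j using Nat.strong_induction_on with
    | _ j ih =>
      intro k hk
      rcases Nat.eq_zero_or_pos j with rfl | hj
      · rw [hδeq1 k (by omega)]
      · have h2 : k + 2 ≤ n := by omega
        have e := hδrec k h2
        have h1 : 1 ≤ d (k+1) := ih (j-1) (by omega) (k+1) (by omega)
        have h0 : 0 ≤ d (k+2) := by
          rcases Nat.lt_or_ge (k+2) n with hlt | hge
          · exact (ih (j-2) (by omega) (k+2) (by omega)).trans' (by norm_num)
          · have : k + 2 = n := by omega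
            rw [this, hδn0]
        have hA2 : 1 ≤ A (k+2) := hA (k+2) (by omega) h2
        nlinarith
  have hδpos' : ∀ k, k + 1 ≤ n → 1 ≤ d k := fun k hk => hδpos (n - k - 1) k (by omega)
  have hδnn : ∀ k, k ≤ n → 0 ≤ d k := by
    intro k hk
    rcases Nat.lt_or_ge k n with hlt | hge
    · exact (hδpos' k (by omega)).trans' (by norm_num)
    · have : k = n := by omega
      rw [this, hδn0]
  have hδmono1 : ∀ k, k + 1 ≤ n → d (k+1) ≤ d k := by
    intro k hk
    rcases Nat.lt_or_ge (k+1) n with hlt | hge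
    · have e := hδrec k (by omega)
      have h1 := hδpos' (k+1) (by omega)
      have h0 := hδnn (k+2) (by omega)
      have hA2 := hA (k+2) (by omega) (by omega)
      nlinarith
    · have hkn : k + 1 = n := by omega
      rw [hkn, hδn0, hδeq1 k hkn]; norm_num
  have hδle : ∀ k l, k ≤ l → l ≤ n → d l ≤ d k := by
    intro k l hkl
    induction l, hkl using Nat.le_induction with
    | base => intro _; exact le_rfl
    | succ l hl ih => intro hln; exact (hδmono1 l (by omega)).trans (ih (by omega))
  have hδ0 : d 0 = a := by simp only [hd]; rw [hQ0, hP0]; ring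
  have hiden : ∀ k, k + 1 ≤ n → Q (k+1) * d k + Q k * d (k+1) = p := by
    intro k hk
    simp only [hd]
    linear_combination ((-1:ℤ)^k * p) * hdet k hk + p * hsq k
  have hmod : ∀ x m v : ℤ, x = m * p + v → 0 ≤ v → v < p → x % p = v := by
    intro x m v hx h0 h1
    subst hx
    rw [show m*p + v = v + p*m by ring, Int.add_mul_emod_self_left, Int.emod_eq_of_lt h0 h1]
  have hfpos : ∀ x : ℤ, 1 ≤ x → x < p → 1 ≤ x * a % p := by
    intro x hx1 hx2
    have h0 : 0 ≤ x * a % p := Int.emod_nonneg _ (ne_of_gt hp0)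
    rcases eq_or_lt_of_le h0 with h0' | h0'
    · exfalso
      have hdvd : p ∣ x * a := Int.dvd_of_emod_eq_zero h0'.symm
      rcases hp.dvd_mul.mp hdvd with h | h
      · exact absurd (Int.le_of_dvd (by omega) h) (by omega)
      · exact hpa h
    · omega
  have hfub : ∀ x : ℤ, x * a % p < p := fun x => Int.emod_lt_of_pos _ hp0
  have hinj : ∀ x y : ℤ, 1 ≤ x → x < p → 1 ≤ y → y < p → x * a % p = y * a % p → x = y := by
    intro x y hx1 hx2 hy1 hy2 hxy
    have hd0 : (x * a - y * a) % p = 0 := Int.emod_emod_of_dvd _ (dvd_refl p) ▸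
      Int.emod_eq_emod_iff_emod_sub_eq_zero.mp hxy
    have hdvd : p ∣ (x - y) * a := by
      have := Int.dvd_of_emod_eq_zero hd0
      rwa [show x*a - y*a = (x-y)*a by ring] at this
    rcases hp.dvd_mul.mp hdvd with h | h
    · have : x - y = 0 := Int.eq_zero_of_abs_lt_dvd h (by rw [abs_lt]; constructor <;> linarith)
      omega
    · exact absurd h hpa
  have hv : ∀ (i : ℕ) (r : ℤ),
      (r * Q (2*i+1) + Q (2*i)) * a - (r * P (2*i+1) + P (2*i)) * p
        = d (2*i) - r * d (2*i+1) := by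
    intro i r
    simp only [hd]
    have h1 : (-1:ℤ)^(2*i) = 1 := hev i
    have h2 : (-1:ℤ)^(2*i+1) = -1 := by rw [pow_succ, h1]; ring
    rw [h1, h2]; ring
  -- best approximation theorem (strict, away from Q k)
  have hBA : ∀ k, k + 2 ≤ n → ∀ g m : ℤ, 1 ≤ g → g < Q (k+1) → g ≠ Q k →
      d k < |g * a - m * p| := by
    intro k hk g m hg1 hg2 hgQ
    have hdk := hδpos' k (by omega)
    have hdk1 := hδpos' (k+1) (by omega)
    have hQk := hQpos k (by omega)
    have hQk1 := hQpos (k+1) (by omega)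
    have e := hdet k (by omega)
    obtain ⟨x, hx⟩ : ∃ x : ℤ, x = (-1:ℤ)^k * (m * Q k - g * P k) := ⟨_, rfl⟩
    obtain ⟨y, hy⟩ : ∃ y : ℤ, y = (-1:ℤ)^k * (g * P (k+1) - m * Q (k+1)) := ⟨_, rfl⟩
    have hgxy : g = x * Q (k+1) + y * Q k := by
      rw [hx, hy]
      linear_combination (-(-1:ℤ)^k * g) * e + (-g) * hsq k
    have hmxy : m = x * P (k+1) + y * P k := by
      rw [hx, hy]
      linear_combination (-(-1:ℤ)^k * m) * e + (-m) * hsq k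
    have habs : g * a - m * p = (-1:ℤ)^k * (y * d k - x * d (k+1)) := by
      rw [hgxy, hmxy]
      simp only [hd]
      linear_combination (-(x*(Q (k+1)*a - P (k+1)*p)) - y*(Q k*a - P k*p)) * hsq k
    have habs2 : |g * a - m * p| = |y * d k - x * d (k+1)| := by
      rw [habs, abs_mul, abs_pow, abs_neg, abs_one, one_pow, one_mul]
    rw [habs2]
    exact aux_BA_core (d k) (d (k+1)) (Q k) (Q (k+1)) g x y hdk hdk1 hQk hQk1 hg1 hg2 hgxy hgQ
  -- the gap lemma
  have hGap : ∀ (i : ℕ) (r : ℤ), 2*i+2 ≤ n → 0 ≤ r → r + 1 ≤ A (2*i+2) →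
      ∀ g : ℤ, 1 ≤ g → g < Q (2*i+1) →
      g * a % p < p - (d (2*i) - r * d (2*i+1)) := by
    intro i r h2i hr0 hrA g hg1 hg2
    have hdk1 := hδpos' (2*i+1) (by omega)
    have hdk := hδpos' (2*i) (by omega)
    have hiden' := hiden (2*i) (by omega)
    have hQk := hQpos (2*i) (by omega)
    have hQk1 := hQpos (2*i+1) (by omega)
    have hQk1' : 2 ≤ Q (2*i+1) := by omega
    by_cases hgQ : g = Q (2*i)
    · have hdval : d (2*i) = Q (2*i) * a - P (2*i) * p := by
        simp only [hd]; rw [hev i]; ring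
      have hw : g * a % p = d (2*i) := by
        apply hmod _ (P (2*i))
        · rw [hgQ, hdval]; ring
        · linarith
        · have := hδle 0 (2*i) (by omega) (by omega)
          rw [hδ0] at this; linarith
      rw [hw]
      exact aux_gapA p (d (2*i)) (d (2*i+1)) r (Q (2*i)) (Q (2*i+1)) hiden' hdk hdk1 hQk hQk1' hr0
    · have hba := hBA (2*i) h2i g (g*a/p + 1) hg1 hg2 hgQ
      have hediv := Int.mul_ediv_add_emod (g*a) p
      have hwlt : g * a % p < p := hfub g
      have heq : g*a - (g*a/p + 1)*p = g*a % p - p := by linear_combination -hediv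
      rw [heq, abs_of_nonpos (by linarith)] at hba
      exact aux_gapB p (d (2*i)) (d (2*i+1)) r (g*a%p) (by linarith) hr0 (by linarith)
  -- value bounds and value of records
  have hvlb : ∀ (i : ℕ) (r : ℤ), 2*i+2 ≤ n → 0 ≤ r → (2*i+3 ≠ n → r < A (2*i+2)) →
      (2*i+3 = n → r ≤ A (2*i+2)) → 1 ≤ d (2*i) - r * d (2*i+1) := by
    intro i r h1 h2 h3 h4
    have hrec := hδrec (2*i) h1
    have hd1 := hδpos' (2*i+1) (by omega)
    by_cases hc : 2*i+3 = n
    · have hd2 : d (2*i+2) = 1 := hδeq1 (2*i+2) (by omega)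
      rw [hd2] at hrec
      exact aux_vlb2 (d (2*i)) (d (2*i+1)) (A (2*i+2)) r hrec (by linarith) (h4 hc)
    · have hd2 : 0 ≤ d (2*i+2) := hδnn (2*i+2) h1
      exact aux_vlb1 (d (2*i)) (d (2*i+1)) (d (2*i+2)) (A (2*i+2)) r hrec hd1 hd2
        (by have := h3 hc; omega)
  have hvub2 : ∀ (i : ℕ) (r : ℤ), 2*i+2 ≤ n → 0 ≤ r → d (2*i) - r * d (2*i+1) < p := by
    intro i r h1 h2
    have h3 := aux_vub (d (2*i)) (d (2*i+1)) r h2 (by linarith [hδpos' (2*i+1) (by omega)])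
    have h4 := hδle 0 (2*i) (by omega) (by omega)
    rw [hδ0] at h4
    linarith
  have hfval : ∀ (i : ℕ) (r : ℤ), 2*i+2 ≤ n → 0 ≤ r → (2*i+3 ≠ n → r < A (2*i+2)) →
      (2*i+3 = n → r ≤ A (2*i+2)) →
      (r * Q (2*i+1) + Q (2*i)) * a % p = d (2*i) - r * d (2*i+1) := by
    intro i r h1 h2 h3 h4
    apply hmod _ (r * P (2*i+1) + P (2*i))
    · linear_combination hv i r
    · linarith [hvlb i r h1 h2 h3 h4]
    · exact hvub2 i r h1 h2
  have hhlb : ∀ (i : ℕ) (r : ℤ), 2*i+2 ≤ n → 0 ≤ r → 1 ≤ r * Q (2*i+1) + Q (2*i) := by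
    intro i r h1 h2
    have hm := mul_nonneg h2 (by linarith [hQpos (2*i+1) (by omega)] : (0:ℤ) ≤ Q (2*i+1))
    linarith [hQpos (2*i) (by omega)]
  have hhub : ∀ (i : ℕ) (r : ℤ), 2*i+2 ≤ n → 0 ≤ r → (2*i+3 ≠ n → r < A (2*i+2)) →
      (2*i+3 = n → r ≤ A (2*i+2)) → r * Q (2*i+1) + Q (2*i) < p := by
    intro i r h1 h2 h3 h4
    have hrec := hQrec (2*i) h1
    have hq1p := hQpos (2*i+1) (by omega)
    by_cases hc : 2*i+3 = n
    · have hub : r * Q (2*i+1) ≤ A (2*i+2) * Q (2*i+1) :=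
        mul_le_mul_of_nonneg_right (h4 hc) (by linarith)
      have hlt := hQltp (2*i+2) (by omega)
      linarith
    · have hr' : r ≤ A (2*i+2) - 1 := by have := h3 hc; omega
      have hub : r * Q (2*i+1) ≤ (A (2*i+2) - 1) * Q (2*i+1) :=
        mul_le_mul_of_nonneg_right hr' (by linarith)
      have hle := hQle (2*i+2) n (by omega) le_rfl
      rw [hQn] at hle
      nlinarith
  -- locating h in a block
  have hblock : ∀ I : ℕ, 2*I ≤ n → ∀ h : ℤ, 1 ≤ h → h < Q (2*I) →
      ∃ i, i < I ∧ Q (2*i) ≤ h ∧ h < Q (2*i+2) := by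
    intro I
    induction I with
    | zero =>
      intro _ h h1 h2
      rw [show 2*0 = 0 from rfl, hQ0] at h2
      exact absurd h2 (not_lt.mpr h1)
    | succ I ih =>
      intro hI h h1 h2
      by_cases hcc : h < Q (2*I)
      · obtain ⟨i, hi, hle2, hlt2⟩ := ih (by omega) h h1 hcc
        exact ⟨i, by omega, hle2, hlt2⟩
      · push_neg at hcc
        have h22 : 2*(I+1) = 2*I+2 := by ring
        rw [h22] at h2
        exact ⟨I, by omega, hcc, h2⟩
  have hcommon : ∀ h : ℤ, 1 ≤ h → h < p → ∀ i, 2*i+2 ≤ n → Q (2*i) ≤ h → h < Q (2*i+2) →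
      ∃ r : ℤ, 0 ≤ r ∧ r < A (2*i+2) ∧ r * Q (2*i+1) + Q (2*i) ≤ h ∧
        (r * Q (2*i+1) + Q (2*i) = h ∨ (r * Q (2*i+1) + Q (2*i)) * a % p < h * a % p) := by
    intro h h1 hp' i h2i hlow hhigh
    have hQ1pos := hQpos (2*i+1) (by omega)
    have hge := Int.mul_ediv_add_emod (h - Q (2*i)) (Q (2*i+1))
    have hg0 : 0 ≤ (h - Q (2*i)) % Q (2*i+1) := Int.emod_nonneg _ (by omega)
    have hglt : (h - Q (2*i)) % Q (2*i+1) < Q (2*i+1) := Int.emod_lt_of_pos _ (by omega)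
    have hr0 : 0 ≤ (h - Q (2*i)) / Q (2*i+1) := Int.ediv_nonneg (by omega) (by omega)
    have hQrec' := hQrec (2*i) h2i
    have hrlt : (h - Q (2*i)) / Q (2*i+1) < A (2*i+2) :=
      aux_common1 _ _ _ _ _ hge hg0 (by linarith) (by omega)
    have hle : ((h - Q (2*i)) / Q (2*i+1)) * Q (2*i+1) + Q (2*i) ≤ h := by linarith
    refine ⟨(h - Q (2*i)) / Q (2*i+1), hr0, hrlt, hle, ?_⟩
    rcases eq_or_lt_of_le hg0 with hg0' | hg0'
    · left; linarith
    · right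
      have hfv := hfval i _ h2i hr0 (fun _ => hrlt) (fun _ => hrlt.le)
      have hgap := hGap i _ h2i hr0 (by omega) _ (by omega) hglt
      have hwpos : 1 ≤ ((h - Q (2*i)) % Q (2*i+1)) * a % p := by
        apply hfpos
        · omega
        · have := hQle (2*i+1) n (by omega) le_rfl
          rw [hQn] at this
          linarith
      have hfh : h * a % p = (d (2*i) - ((h - Q (2*i)) / Q (2*i+1)) * d (2*i+1))
          + ((h - Q (2*i)) % Q (2*i+1)) * a % p := by
        apply hmod _ ((((h - Q (2*i)) / Q (2*i+1)) * P (2*i+1) + P (2*i))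
          + ((h - Q (2*i)) % Q (2*i+1)) * a / p)
        · have hvv := hv i ((h - Q (2*i)) / Q (2*i+1))
          have hed := Int.mul_ediv_add_emod (((h - Q (2*i)) % Q (2*i+1)) * a) p
          linear_combination hvv - hed - a * hge
        · linarith [hvlb i _ h2i hr0 (fun _ => hrlt) (fun _ => hrlt.le)]
        · linarith
      rw [hfh, hfv]
      linarith
  -- the key location lemma
  have hKEY : ∀ h : ℤ, 1 ≤ h → h < p → ∃ i : ℕ, ∃ r : ℤ,
      (2*i+2 ≤ n ∧ 0 ≤ r ∧ (2*i+3 ≠ n → r < A (2*i+2)) ∧ (2*i+3 = n → r ≤ A (2*i+2))) ∧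
      r * Q (2*i+1) + Q (2*i) ≤ h ∧
      (r * Q (2*i+1) + Q (2*i) = h ∨ (r * Q (2*i+1) + Q (2*i)) * a % p < h * a % p) := by
    intro h h1 hp'
    rcases Nat.even_or_odd n with ⟨I, hI⟩ | ⟨J, hJ⟩
    · have hb := hblock I (by omega) h h1 (by rw [show 2*I = n by omega, hQn]; exact hp')
      obtain ⟨i, hiI, hlow, hhigh⟩ := hb
      obtain ⟨r, hr0, hrlt, hle, halt⟩ := hcommon h h1 hp' i (by omega) hlow hhigh
      exact ⟨i, r, ⟨by omega, hr0, fun _ => hrlt, fun _ => hrlt.le⟩, hle, halt⟩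
    · by_cases hc : h < Q (2*J)
      · obtain ⟨i, hiJ, hlow, hhigh⟩ := hblock J (by omega) h h1 hc
        obtain ⟨r, hr0, hrlt, hle, halt⟩ := hcommon h h1 hp' i (by omega) hlow hhigh
        exact ⟨i, r, ⟨by omega, hr0, fun _ => hrlt, fun _ => hrlt.le⟩, hle, halt⟩
      · push_neg at hc
        obtain ⟨J', rfl⟩ : ∃ J', J = J' + 1 := ⟨J - 1, by omega⟩
        have h22 : 2*(J'+1) = 2*J'+2 := by ring
        rw [h22] at hc
        have hrecQ := hQrec (2*J') (by omega)
        have hAp : 0 ≤ A (2*J'+2) := by linarith [hA (2*J'+2) (by omega) (by omega)]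
        have hVal2 : 2*J'+2 ≤ n := by omega
        have hVal3 : 2*J'+3 ≠ n → A (2*J'+2) < A (2*J'+2) :=
          fun hne => absurd (by omega : 2*J'+3 = n) hne
        refine ⟨J', A (2*J'+2), ⟨hVal2, hAp, hVal3, fun _ => le_rfl⟩, by linarith, ?_⟩
        by_cases heq : A (2*J'+2) * Q (2*J'+1) + Q (2*J') = h
        · exact Or.inl heq
        · right
          have hfv := hfval J' (A (2*J'+2)) hVal2 hAp hVal3 (fun _ => le_rfl)
          have hv1 : d (2*J') - A (2*J'+2) * d (2*J'+1) = 1 := by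
            have hrec := hδrec (2*J') (by omega)
            have hd2 := hδeq1 (2*J'+2) (by omega)
            linarith
          rw [hfv, hv1]
          have hf1 := hfpos h h1 hp'
          rcases eq_or_lt_of_le hf1 with hf1' | hf1'
          · exfalso
            apply heq
            apply hinj _ h (hhlb J' _ hVal2 hAp) (hhub J' _ hVal2 hAp hVal3 (fun _ => le_rfl))
              h1 hp'
            rw [hfv, hv1]
            exact hf1'
          · exact hf1'
  -- monotonicity of record values
  have hM1 : ∀ (i : ℕ) (r : ℤ) (i' : ℕ) (r' : ℤ),
      (2*i+2 ≤ n ∧ 0 ≤ r ∧ (2*i+3 ≠ n → r < A (2*i+2)) ∧ (2*i+3 = n → r ≤ A (2*i+2))) →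
      (2*i'+2 ≤ n ∧ 0 ≤ r' ∧ (2*i'+3 ≠ n → r' < A (2*i'+2)) ∧ (2*i'+3 = n → r' ≤ A (2*i'+2))) →
      r' * Q (2*i'+1) + Q (2*i') < r * Q (2*i+1) + Q (2*i) →
      d (2*i) - r * d (2*i+1) < d (2*i') - r' * d (2*i'+1) := by
    intro i r i' r' hV hV' hlt
    obtain ⟨hV1, hV2, hV3, hV4⟩ := hV
    obtain ⟨hW1, hW2, hW3, hW4⟩ := hV'
    rcases lt_trichotomy i' i with hc | hc | hc
    · have hne : 2*i'+3 ≠ n := by omega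
      exact aux_M1a (d (2*i)) (d (2*i+1)) (d (2*i')) (d (2*i'+1)) (d (2*i'+2)) (A (2*i'+2)) r r'
        (hδrec (2*i') (by omega)) (hδle (2*i'+2) (2*i) (by omega) (by omega))
        (hδpos' (2*i'+1) (by omega)) hV2 (by linarith [hδpos' (2*i+1) (by omega)])
        (by have := hW3 hne; omega)
    · subst hc
      have hQ1 := hQpos (2*i'+1) (by omega)
      have hrr : r' < r := by
        by_contra hcon
        push_neg at hcon
        have := mul_le_mul_of_nonneg_right hcon (by linarith : (0:ℤ) ≤ Q (2*i'+1))
        linarith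
      exact aux_M1c (d (2*i')) (d (2*i'+1)) r r' (by omega) (hδpos' (2*i'+1) (by omega))
    · exfalso
      have hrA2 : r ≤ A (2*i+2) := by
        by_cases hcc : 2*i+3 = n
        · exact hV4 hcc
        · have := hV3 hcc; omega
      have h1 : r * Q (2*i+1) ≤ A (2*i+2) * Q (2*i+1) :=
        mul_le_mul_of_nonneg_right hrA2 (by linarith [hQpos (2*i+1) (by omega)])
      have h2 := hQrec (2*i) hV1
      have h3 := hQle (2*i+2) (2*i') (by omega) (by omega)
      have h4 := mul_nonneg hW2 (by linarith [hQpos (2*i'+1) (by omega)] : (0:ℤ) ≤ Q (2*i'+1))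
      linarith
  -- translation lemmas
  have hfr : ∀ x : ℤ, Int.fract ((x:ℝ) * (a:ℝ) / (p:ℝ)) = ((x * a % p : ℤ):ℝ) / (p:ℝ) := by
    intro x
    have h2 : ((p.toNat : ℕ) : ℤ) = p := Int.toNat_of_nonneg hp0.le
    have h1 : ((p.toNat : ℕ) : ℝ) = (p:ℝ) := by exact_mod_cast congrArg (Int.cast : ℤ → ℝ) h2
    have h3 : (x:ℝ) * (a:ℝ) / (p:ℝ) = ((x*a : ℤ):ℝ) / ((p.toNat:ℕ):ℝ) := by
      rw [h1]; push_cast; ring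
    rw [h3, Int.fract_div_intCast_eq_div_intCast_mod, h2]
    rw [h1]
  have hq1 : ∀ i : ℕ, ((i:ℚ) < ((n:ℚ) - 1)/2) ↔ 2*i+2 ≤ n := by
    intro i
    rw [lt_div_iff₀ (by norm_num : (0:ℚ) < 2)]
    constructor
    · intro hlt
      have hcast : ((2*i+1 : ℕ) : ℚ) < (n : ℚ) := by push_cast; linarith
      have := Nat.cast_lt.mp hcast
      omega
    · intro hle
      have hcast : ((2*i+1 : ℕ) : ℚ) < (n : ℚ) := by exact_mod_cast (by omega : 2*i+1 < n)
      push_cast at hcast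
      linarith
  have hq2 : ∀ i : ℕ, ((i:ℚ) = ((n:ℚ) - 3)/2) ↔ 2*i+3 = n := by
    intro i
    rw [eq_div_iff (by norm_num : (2:ℚ) ≠ 0)]
    constructor
    · intro heq
      have hcast : ((2*i+3 : ℕ) : ℚ) = (n : ℚ) := by push_cast; linarith
      exact_mod_cast hcast
    · intro heq
      have hcast : ((2*i+3 : ℕ) : ℚ) = (n : ℚ) := by exact_mod_cast heq
      push_cast at hcast
      linarith
  -- final assembly
  rw [hE]
  ext x
  simp only [Set.mem_setOf_eq]
  constructor
  · rintro ⟨hx1, hx2, hcond⟩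
    have hcond' : ∀ h' : ℤ, 1 ≤ h' → h' < x → x * a % p < h' * a % p := by
      intro h' hh1 hh2
      have hcc := hcond h' hh1 hh2
      rw [hfr, hfr, div_lt_div_iff₀ hpR hpR] at hcc
      have := lt_of_mul_lt_mul_right hcc hpR.le
      exact_mod_cast this
    obtain ⟨i, r, hV, hle, heq⟩ := hKEY x hx1 hx2
    rcases heq with heqq | hlt
    · obtain ⟨hV1, hV2, hV3, hV4⟩ := hV
      exact ⟨i, r, (hq1 i).mpr hV1, hV2, fun hne => hV3 (fun h3 => hne ((hq2 i).mpr h3)),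
        fun he => hV4 ((hq2 i).mp he), heqq.symm⟩
    · exfalso
      obtain ⟨hV1, hV2, hV3, hV4⟩ := hV
      have hge1 : 1 ≤ r * Q (2*i+1) + Q (2*i) := hhlb i r hV1 hV2
      have hlt2 : r * Q (2*i+1) + Q (2*i) < x := by
        rcases eq_or_lt_of_le hle with he | hl
        · rw [he] at hlt; exact absurd hlt (lt_irrefl _)
        · exact hl
      have := hcond' _ hge1 hlt2
      linarith
  · rintro ⟨i, r, hiq, hr0, hc1, hc2, hxeq⟩
    have hV1 : 2*i+2 ≤ n := (hq1 i).mp hiq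
    have hV3 : 2*i+3 ≠ n → r < A (2*i+2) := fun h3 => hc1 (fun he => h3 ((hq2 i).mp he))
    have hV4 : 2*i+3 = n → r ≤ A (2*i+2) := fun h3 => hc2 ((hq2 i).mpr h3)
    subst hxeq
    refine ⟨hhlb i r hV1 hr0, hhub i r hV1 hr0 hV3 hV4, ?_⟩
    intro h' hh1 hh2
    have hint : (r * Q (2*i+1) + Q (2*i)) * a % p < h' * a % p := by
      obtain ⟨i', r', hV', hle', heq'⟩ := hKEY h' hh1 (hh2.trans (hhub i r hV1 hr0 hV3 hV4))
      have hm1 := hM1 i r i' r' ⟨hV1, hr0, hV3, hV4⟩ hV' (lt_of_le_of_lt hle' hh2)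
      obtain ⟨hW1, hW2, hW3, hW4⟩ := hV'
      rw [hfval i r hV1 hr0 hV3 hV4]
      rcases heq' with heq' | hlt'
      · rw [← heq', hfval i' r' hW1 hW2 hW3 hW4]
        exact hm1
      · rw [hfval i' r' hW1 hW2 hW3 hW4] at hlt'
        linarith
    rw [hfr, hfr, div_lt_div_iff₀ hpR hpR]
    exact mul_lt_mul_of_pos_right (by exact_mod_cast hint) hpR
end

section
/- Let p be an odd prime and a an integer with 0 < a < p, with canonical continued fraction expansion a/p = [0; a_1, …, a_n] and convergent denominators q_k. For integers r with 0 ≤ r ≤ a_{2i+2}, write q_{2i,r} := r·q_{2i+1} + q_{2i}. Let h be an integer with 1 ≤ h < p and let i be an integer with 0 ≤ i < (n−1)/2. If the fractional part of q_{2i+2}·a/p is strictly less than the fractional part of h·a/p, which in turn is strictly less than the fractional part of q_{2i}·a/p, then there exists an integer r with 0 ≤ r ≤ a_{2i+2} such that ‖(h − q_{2i,r})·a/p‖ < ‖q_{2i+1}·a/p‖, and such that, if in addition |h − q_{2i,r}| < q_{2i+2}, then h = q_{2i,r}. -/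
/-!
Write `E_k = p·|q_k a/p - p_k| = ±(q_k a - p_k p)`. The `E_k` satisfy the recurrence
`E_k = E_{k+2} + a_{k+2} E_{k+1}` and end with `E_{n-1} = 1`, `E_n = 0`, so they are nonnegative
and decrease; even-indexed ones are the residues `q_k a mod p`. Since `E_{2i} - E_{2i+2} =
a_{2i+2} E_{2i+1}`, the residue of `h a` falls into one of the steps of length `E_{2i+1}`
between `E_{2i}` and `E_{2i+2}`; this picks `r`, and `(h - q_{2i,r}) a` is then congruent to a
number in `[0, E_{2i+1})`. The second claim is the best-approximation property of convergents:
`|t a - u p| ≥ E_{2i+1}` whenever `0 < |t| < q_{2i+2}`, which follows by writing `(t, u)` in the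
unimodular basis `(q_{2i+2}, p_{2i+2}), (q_{2i+1}, p_{2i+1})`.
-/

/-- The distance from a real number to the nearest integer. -/
noncomputable def distNearestInt (x : ℝ) : ℝ := |x - round x|

section NearestInteger

variable {z p : ℤ}

lemma distNearestInt_intCast_div_le (hp : 0 < p) (u : ℤ) :
    distNearestInt ((z : ℝ) / p) ≤ (|z - u * p| : ℤ) / p := by
  have hpR : (0 : ℝ) < p := by exact_mod_cast hp
  calc distNearestInt ((z : ℝ) / p) ≤ |(z : ℝ) / p - u| := round_le _ u
    _ = (|z - u * p| : ℤ) / p := by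
      rw [Int.cast_abs, ← abs_of_pos hpR, ← abs_div, abs_of_pos hpR]
      push_cast
      field_simp

lemma le_distNearestInt_intCast_div (hp : 0 < p) {d : ℤ} (hd : ∀ u : ℤ, d ≤ |z - u * p|) :
    (d : ℝ) / p ≤ distNearestInt ((z : ℝ) / p) := by
  have hpR : (0 : ℝ) < p := by exact_mod_cast hp
  calc (d : ℝ) / p ≤ (|z - round ((z : ℝ) / p) * p| : ℤ) / p := by
        gcongr
        exact_mod_cast hd _
    _ = distNearestInt ((z : ℝ) / p) := by
      rw [distNearestInt, Int.cast_abs, ← abs_of_pos hpR, ← abs_div, abs_of_pos hpR]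
      push_cast
      field_simp

lemma distNearestInt_intCast_div_eq (hp : 0 < p) {u : ℤ} (hu : 2 * |z - u * p| ≤ p) :
    distNearestInt ((z : ℝ) / p) = (|z - u * p| : ℤ) / p := by
  refine le_antisymm (distNearestInt_intCast_div_le hp u) (le_distNearestInt_intCast_div hp ?_)
  intro v
  rcases eq_or_ne v u with rfl | hvu
  · rfl
  have : p ≤ |(v - u) * p| := by
    rw [abs_mul, abs_of_pos hp]
    exact le_mul_of_one_le_left hp.le (Int.one_le_abs (sub_ne_zero.mpr hvu))
  have : |(v - u) * p| ≤ |z - u * p| + |z - v * p| := by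
    calc |(v - u) * p| = |(z - u * p) - (z - v * p)| := by ring_nf
      _ ≤ _ := abs_sub _ _
  linarith

lemma fract_intCast_div (hp : 0 < p) : Int.fract ((z : ℝ) / p) = ((z % p : ℤ) : ℝ) / p := by
  have hpR : (0 : ℝ) < p := by exact_mod_cast hp
  have hz : (z : ℝ) / p = (z / p : ℤ) + ((z % p : ℤ) : ℝ) / p := by
    rw [div_eq_iff hpR.ne', add_mul, div_mul_cancel₀ _ hpR.ne']
    exact_mod_cast (Int.mul_ediv_add_emod z p).symm.trans (by ring)
  rw [hz, Int.fract_intCast_add, Int.fract_eq_self]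
  refine ⟨by have := Int.emod_nonneg z hp.ne'; positivity, ?_⟩
  rw [div_lt_one hpR]
  exact_mod_cast Int.emod_lt_of_pos z hp

lemma fract_intCast_div_lt_iff (hp : 0 < p) {w : ℤ} :
    Int.fract ((z : ℝ) / p) < Int.fract ((w : ℝ) / p) ↔ z % p < w % p := by
  rw [fract_intCast_div hp, fract_intCast_div hp,
    div_lt_div_iff_of_pos_right (by exact_mod_cast hp), Int.cast_lt]

end NearestInteger

/-- Since `0 < |x q₁ + y q₀| < q₁`, `x` and `y` have opposite signs and `y ≠ 0`, so the two
terms of `x e₁ + y e₀` have the same sign. -/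
lemma abs_le_abs_mul_add_mul {q₀ q₁ e₀ e₁ x y : ℤ} (hq₀ : 0 ≤ q₀) (he : e₀ * e₁ ≤ 0)
    (ht : x * q₁ + y * q₀ ≠ 0) (htq : |x * q₁ + y * q₀| < q₁) :
    |e₀| ≤ |x * e₁ + y * e₀| := by
  have hq₁ : 0 < q₁ := (abs_nonneg _).trans_lt htq
  have hy : y ≠ 0 := by
    rintro rfl
    have hx : x ≠ 0 := by rintro rfl; simp at ht
    rw [zero_mul, add_zero, abs_mul, abs_of_pos hq₁] at htq
    nlinarith [Int.one_le_abs hx]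
  have hxy : x * y ≤ 0 := by
    obtain ⟨hlo, hhi⟩ := abs_lt.mp htq
    rcases lt_trichotomy x 0 with hx | rfl | hx <;> rcases lt_trichotomy y 0 with hy | rfl | hy <;>
      nlinarith
  have hsame : 0 ≤ (x * e₁) * (y * e₀) := by nlinarith
  calc |e₀| ≤ |y| * |e₀| := le_mul_of_one_le_left (abs_nonneg _) (Int.one_le_abs hy)
    _ ≤ |x * e₁| + |y * e₀| := by rw [abs_mul y]; linarith [abs_nonneg (x * e₁)]
    _ = |x * e₁ + y * e₀| := ((abs_add_eq_add_abs_iff _ _).mpr (mul_nonneg_iff.mp hsame)).symm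

lemma exists_sub_mul_mem_Ico {x d N m : ℤ} (hd : 0 < d) (hlo : x - N * d ≤ m) (hhi : m ≤ x) :
    ∃ s, 0 ≤ s ∧ s ≤ N ∧ 0 ≤ m - (x - s * d) ∧ m - (x - s * d) < d := by
  have hdiv := Int.mul_ediv_add_emod (x - m + d - 1) d
  have hr0 := Int.emod_nonneg (x - m + d - 1) hd.ne'
  have hrd := Int.emod_lt_of_pos (x - m + d - 1) hd
  refine ⟨(x - m + d - 1) / d, ?_, ?_, by linarith, by linarith⟩
  · exact Int.ediv_nonneg (by linarith) hd.le
  · by_contra! hN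
    nlinarith

section ContinuedFraction

variable {n : ℕ} {A P Q : ℕ → ℤ} {a p : ℤ}

lemma convergent_det (hP0 : P 0 = 0) (hP1 : P 1 = 1) (hQ0 : Q 0 = 1)
    (hQrec : ∀ k, k + 2 ≤ n → Q (k + 2) = A (k + 2) * Q (k + 1) + Q k)
    (hPrec : ∀ k, k + 2 ≤ n → P (k + 2) = A (k + 2) * P (k + 1) + P k) :
    ∀ k, k + 1 ≤ n → P (k + 1) * Q k - P k * Q (k + 1) = (-1) ^ k := by
  intro k hk
  induction k with
  | zero => simp [hP0, hP1, hQ0]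
  | succ k ih =>
    rw [hPrec k hk, hQrec k hk, pow_succ]
    linear_combination -ih (by omega)

lemma convergentDen_nonneg (hA : ∀ k, 1 ≤ k → k ≤ n → 1 ≤ A k) (hQ0 : Q 0 = 1)
    (hQ1 : Q 1 = A 1) (hQrec : ∀ k, k + 2 ≤ n → Q (k + 2) = A (k + 2) * Q (k + 1) + Q k) :
    ∀ k ≤ n, 0 ≤ Q k := by
  intro k
  induction k using Nat.twoStepInduction with
  | zero => intro; rw [hQ0]; exact zero_le_one
  | one => intro hn; rw [hQ1]; linarith [hA 1 le_rfl hn]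
  | more k ih₀ ih₁ =>
    intro hk
    rw [hQrec k hk]
    have := hA (k + 2) (by omega) hk
    nlinarith [ih₀ (by omega), ih₁ (by omega)]

/-- For a canonical expansion this is `p · |q_k · a/p - p_k|`. -/
def cfRemainder (P Q : ℕ → ℤ) (a p : ℤ) (k : ℕ) : ℤ := (-1) ^ k * (Q k * a - P k * p)

lemma mul_eq_add_cfRemainder (k : ℕ) :
    Q k * a = P k * p + (-1) ^ k * cfRemainder P Q a p k := by
  unfold cfRemainder
  linear_combination
    -(Q k * a - P k * p) * pow_mul_pow_eq_one k (by norm_num : (-1 : ℤ) * -1 = 1)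

lemma abs_mul_sub_mul_eq_cfRemainder {k : ℕ} (hE : 0 ≤ cfRemainder P Q a p k) :
    |Q k * a - P k * p| = cfRemainder P Q a p k := by
  rw [mul_eq_add_cfRemainder k, add_sub_cancel_left, abs_mul, abs_neg_one_pow, one_mul,
    abs_of_nonneg hE]

lemma emod_eq_cfRemainder {k : ℕ} (hk : Even k) (hE : 0 ≤ cfRemainder P Q a p k)
    (hEp : cfRemainder P Q a p k < p) : Q k * a % p = cfRemainder P Q a p k := by
  rw [mul_eq_add_cfRemainder k, hk.neg_one_pow, one_mul, add_comm, Int.add_mul_emod_self_right,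
    Int.emod_eq_of_lt hE hEp]

lemma intermediate_mul_eq {k : ℕ} (hk : Even k) (s : ℤ) :
    (s * Q (k + 1) + Q k) * a = (s * P (k + 1) + P k) * p +
      (cfRemainder P Q a p k - s * cfRemainder P Q a p (k + 1)) := by
  have h₀ := mul_eq_add_cfRemainder (P := P) (Q := Q) (a := a) (p := p) k
  have h₁ := mul_eq_add_cfRemainder (P := P) (Q := Q) (a := a) (p := p) (k + 1)
  rw [pow_succ, hk.neg_one_pow] at h₁
  rw [hk.neg_one_pow] at h₀
  linear_combination s * h₁ + h₀

lemma cfRemainder_eq_add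
    (hQrec : ∀ k, k + 2 ≤ n → Q (k + 2) = A (k + 2) * Q (k + 1) + Q k)
    (hPrec : ∀ k, k + 2 ≤ n → P (k + 2) = A (k + 2) * P (k + 1) + P k) :
    ∀ k, k + 2 ≤ n → cfRemainder P Q a p k =
      cfRemainder P Q a p (k + 2) + A (k + 2) * cfRemainder P Q a p (k + 1) := by
  intro k hk
  simp only [cfRemainder, hQrec k hk, hPrec k hk, pow_succ]
  ring

lemma cfRemainder_last (hQn : Q n = p) (hPn : P n = a) : cfRemainder P Q a p n = 0 := by
  simp [cfRemainder, hQn, hPn, mul_comm]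

lemma cfRemainder_pred_last (hQn : Q n = p) (hPn : P n = a)
    (hdet : P n * Q (n - 1) - P (n - 1) * Q n = (-1) ^ (n - 1)) :
    cfRemainder P Q a p (n - 1) = 1 := by
  unfold cfRemainder
  rw [← hQn, ← hPn]
  linear_combination
    (-1) ^ (n - 1) * hdet + pow_mul_pow_eq_one (n - 1) (by norm_num : (-1 : ℤ) * -1 = 1)

lemma antitoneOn_and_nonneg_of_recurrence {E : ℕ → ℤ} (hA : ∀ k, 1 ≤ k → k ≤ n → 1 ≤ A k)
    (hrec : ∀ k, k + 2 ≤ n → E k = E (k + 2) + A (k + 2) * E (k + 1))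
    (hlast : 0 ≤ E n) (hpred : E n ≤ E (n - 1)) :
    AntitoneOn E (Set.Iic n) ∧ ∀ k ≤ n, 0 ≤ E k := by
  have step : ∀ k, k + 1 ≤ n → 0 ≤ E (k + 1) ∧ E (k + 1) ≤ E k := by
    intro k hk
    induction hj : n - (k + 1) generalizing k with
    | zero =>
      obtain rfl : n = k + 1 := by omega
      exact ⟨hlast, hpred⟩
    | succ j ih =>
      obtain ⟨h₀, h₁⟩ := ih (k + 1) (by omega) (by omega)
      have := hA (k + 2) (by omega) (by omega)
      rw [hrec k (by omega)]
      constructor <;> nlinarith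
  have anti : AntitoneOn E (Set.Iic n) :=
    antitoneOn_of_add_one_le Set.ordConnected_Iic fun k _ _ hk => (step k hk).2
  exact ⟨anti, fun k hk => hlast.trans (anti hk (Set.mem_Iic.mpr le_rfl) hk)⟩

lemma cfRemainder_antitoneOn_nonneg_pos (hA : ∀ k, 1 ≤ k → k ≤ n → 1 ≤ A k)
    (hP0 : P 0 = 0) (hP1 : P 1 = 1) (hQ0 : Q 0 = 1)
    (hQrec : ∀ k, k + 2 ≤ n → Q (k + 2) = A (k + 2) * Q (k + 1) + Q k)
    (hPrec : ∀ k, k + 2 ≤ n → P (k + 2) = A (k + 2) * P (k + 1) + P k)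
    (hQn : Q n = p) (hPn : P n = a) (hn : 1 ≤ n) :
    AntitoneOn (cfRemainder P Q a p) (Set.Iic n) ∧ (∀ k ≤ n, 0 ≤ cfRemainder P Q a p k) ∧
      ∀ k < n, 0 < cfRemainder P Q a p k := by
  have hpred : cfRemainder P Q a p (n - 1) = 1 := cfRemainder_pred_last hQn hPn (by
    simpa [show n - 1 + 1 = n by omega] using
      convergent_det hP0 hP1 hQ0 hQrec hPrec (n - 1) (by omega))
  obtain ⟨anti, nonneg⟩ := antitoneOn_and_nonneg_of_recurrence hA (cfRemainder_eq_add hQrec hPrec)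
    (cfRemainder_last hQn hPn).ge (by rw [cfRemainder_last hQn hPn, hpred]; norm_num)
  refine ⟨anti, nonneg, fun k hk => ?_⟩
  have := anti (Set.mem_Iic.mpr hk.le) (Set.mem_Iic.mpr (Nat.sub_le n 1)) (by omega)
  omega

lemma two_mul_cfRemainder_le (ha : 0 ≤ a) (hA1 : 1 ≤ A 1) (hQ0 : Q 0 = 1) (hQ1 : Q 1 = A 1)
    (hP0 : P 0 = 0) (hP1 : P 1 = 1) (hanti : AntitoneOn (cfRemainder P Q a p) (Set.Iic n))
    {k : ℕ} (hk : 1 ≤ k) (hkn : k ≤ n) : 2 * cfRemainder P Q a p k ≤ p := by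
  have h₁ : cfRemainder P Q a p k ≤ cfRemainder P Q a p 1 :=
    hanti (Set.mem_Iic.mpr (hk.trans hkn)) (Set.mem_Iic.mpr hkn) hk
  have h₀ : cfRemainder P Q a p 1 ≤ cfRemainder P Q a p 0 :=
    hanti (Nat.zero_le n) (Set.mem_Iic.mpr (hk.trans hkn)) (Nat.zero_le 1)
  have e₀ : cfRemainder P Q a p 0 = a := by simp [cfRemainder, hQ0, hP0]
  have e₁ : cfRemainder P Q a p 1 = p - A 1 * a := by simp [cfRemainder, hQ1, hP1]
  nlinarith

lemma distNearestInt_eq_cfRemainder (hp : 0 < p) {k : ℕ} (hE : 0 ≤ cfRemainder P Q a p k)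
    (h2E : 2 * cfRemainder P Q a p k ≤ p) :
    distNearestInt (((Q k * a : ℤ) : ℝ) / p) = cfRemainder P Q a p k / p := by
  rw [distNearestInt_intCast_div_eq hp (u := P k), abs_mul_sub_mul_eq_cfRemainder hE]
  rwa [abs_mul_sub_mul_eq_cfRemainder hE]

lemma distNearestInt_sub_intermediate_lt (hp : 0 < p) {k : ℕ} (hk : Even k) {h s : ℤ}
    (hg₀ : 0 ≤ h * a % p - (cfRemainder P Q a p k - s * cfRemainder P Q a p (k + 1)))
    (hg₁ : h * a % p - (cfRemainder P Q a p k - s * cfRemainder P Q a p (k + 1)) <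
      cfRemainder P Q a p (k + 1)) :
    distNearestInt ((((h - (s * Q (k + 1) + Q k)) * a : ℤ) : ℝ) / p) <
      cfRemainder P Q a p (k + 1) / p := by
  refine (distNearestInt_intCast_div_le hp (h * a / p - (s * P (k + 1) + P k))).trans_lt ?_
  have hres : (h - (s * Q (k + 1) + Q k)) * a - (h * a / p - (s * P (k + 1) + P k)) * p =
      h * a % p - (cfRemainder P Q a p k - s * cfRemainder P Q a p (k + 1)) := by
    linear_combination
      -Int.mul_ediv_add_emod (h * a) p - intermediate_mul_eq (P := P) (a := a) (p := p) hk s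
  rw [hres, abs_of_nonneg hg₀]
  gcongr

/-- The best-approximation property of the convergents. -/
lemma cfRemainder_le_abs_sub {k : ℕ} (hdet : P (k + 1) * Q k - P k * Q (k + 1) = (-1) ^ k)
    (hQ : 0 ≤ Q k) (hE₀ : 0 ≤ cfRemainder P Q a p k) (hE₁ : 0 ≤ cfRemainder P Q a p (k + 1))
    {t u : ℤ} (ht : t ≠ 0) (htQ : |t| < Q (k + 1)) :
    cfRemainder P Q a p k ≤ |t * a - u * p| := by
  have hD₀ := mul_eq_add_cfRemainder (P := P) (Q := Q) (a := a) (p := p) k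
  have hD₁ := mul_eq_add_cfRemainder (P := P) (Q := Q) (a := a) (p := p) (k + 1)
  rw [pow_succ] at hD₁
  set δ : ℤ := (-1) ^ k
  set E₀ := cfRemainder P Q a p k
  set E₁ := cfRemainder P Q a p (k + 1)
  have hδ : δ * δ = 1 := pow_mul_pow_eq_one k (by norm_num : (-1 : ℤ) * -1 = 1)
  set x := -δ * (P k * t - Q k * u)
  set y := δ * (P (k + 1) * t - Q (k + 1) * u)
  have hxt : x * Q (k + 1) + y * Q k = t := by linear_combination δ * t * hdet + t * hδ
  have hxu : x * P (k + 1) + y * P k = u := by linear_combination δ * u * hdet + u * hδ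
  have hsum : t * a - u * p = x * -(δ * E₁) + y * (δ * E₀) := by
    linear_combination (-a) * hxt + p * hxu + x * hD₁ + y * hD₀
  have he : (δ * E₀) * -(δ * E₁) ≤ 0 := by
    rw [show (δ * E₀) * -(δ * E₁) = -(E₀ * E₁) by linear_combination (-(E₀ * E₁)) * hδ]
    exact neg_nonpos.mpr (mul_nonneg hE₀ hE₁)
  have key := abs_le_abs_mul_add_mul hQ he (hxt ▸ ht) (hxt ▸ htQ)
  rwa [← hsum, abs_mul, abs_neg_one_pow, one_mul, abs_of_nonneg hE₀] at key

end ContinuedFraction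

theorem statement12_general
    (p a : ℤ) (ha : 0 < a) (hap : a < p)
    (n : ℕ) (A P Q : ℕ → ℤ)
    -- canonical continued fraction expansion a/p = [0; A 1, …, A n]
    (hA : ∀ k, 1 ≤ k → k ≤ n → 1 ≤ A k)
    -- denominators of the convergents
    (hQ0 : Q 0 = 1) (hQ1 : Q 1 = A 1)
    (hQrec : ∀ k, k + 2 ≤ n → Q (k + 2) = A (k + 2) * Q (k + 1) + Q k)
    -- numerators of the convergents
    (hP0 : P 0 = 0) (hP1 : P 1 = 1)
    (hPrec : ∀ k, k + 2 ≤ n → P (k + 2) = A (k + 2) * P (k + 1) + P k)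
    -- the n-th convergent is a/p in lowest terms
    (hQn : Q n = p) (hPn : P n = a)
    (h : ℤ)
    (i : ℕ) (hi : (i : ℚ) < ((n : ℚ) - 1) / 2)
    (hf1 : Int.fract (((Q (2 * i + 2) * a : ℤ) : ℝ) / (p : ℝ)) <
      Int.fract (((h * a : ℤ) : ℝ) / (p : ℝ)))
    (hf2 : Int.fract (((h * a : ℤ) : ℝ) / (p : ℝ)) <
      Int.fract (((Q (2 * i) * a : ℤ) : ℝ) / (p : ℝ))) :
    ∃ s : ℤ, 0 ≤ s ∧ s ≤ A (2 * i + 2) ∧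
      distNearestInt ((((h - (s * Q (2 * i + 1) + Q (2 * i))) * a : ℤ) : ℝ) / (p : ℝ)) <
        distNearestInt (((Q (2 * i + 1) * a : ℤ) : ℝ) / (p : ℝ)) ∧
      (|h - (s * Q (2 * i + 1) + Q (2 * i))| < Q (2 * i + 2) →
        h = s * Q (2 * i + 1) + Q (2 * i)) := by
  have hn : 2 * i + 2 ≤ n := by
    have : ((2 * i + 1 : ℕ) : ℚ) < n := by push_cast; linarith
    have : 2 * i + 1 < n := by exact_mod_cast this
    omega
  have hp : 0 < p := ha.trans hap
  obtain ⟨hanti, hE, hpos⟩ :=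
    cfRemainder_antitoneOn_nonneg_pos hA hP0 hP1 hQ0 hQrec hPrec hQn hPn (by omega)
  have hEp : ∀ k ≤ n, cfRemainder P Q a p k < p := fun k hk =>
    (hanti (Nat.zero_le n) hk (Nat.zero_le k)).trans_lt (by simpa [cfRemainder, hQ0, hP0])
  rw [fract_intCast_div_lt_iff hp,
    emod_eq_cfRemainder ⟨i + 1, by ring⟩ (hE _ hn) (hEp _ hn)] at hf1
  rw [fract_intCast_div_lt_iff hp,
    emod_eq_cfRemainder (even_two_mul i) (hE _ (by omega)) (hEp _ (by omega))] at hf2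
  obtain ⟨s, hs0, hsA, hg₀, hg₁⟩ := exists_sub_mul_mem_Ico (hpos (2 * i + 1) (by omega))
    (N := A (2 * i + 2)) (by linarith [cfRemainder_eq_add (a := a) (p := p) hQrec hPrec _ hn])
    hf2.le
  have hnear := distNearestInt_sub_intermediate_lt hp (even_two_mul i) hg₀ hg₁
  have hdist := distNearestInt_eq_cfRemainder hp (hE (2 * i + 1) (by omega))
    (two_mul_cfRemainder_le ha.le (hA 1 le_rfl (by omega)) hQ0 hQ1 hP0 hP1 hanti (by omega)
      (by omega))
  refine ⟨s, hs0, hsA, hdist ▸ hnear, fun hlt => ?_⟩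
  by_contra hne
  have hfar := le_distNearestInt_intCast_div hp fun u =>
    cfRemainder_le_abs_sub (u := u) (convergent_det hP0 hP1 hQ0 hQrec hPrec _ hn)
      (convergentDen_nonneg hA hQ0 hQ1 hQrec _ (by omega)) (hE _ (by omega)) (hE _ hn)
      (sub_ne_zero.mpr hne) hlt
  exact hfar.not_gt hnear

/-- Lemma 7.5: for the canonical continued fraction expansion
`a/p = [0; a_1, …, a_n]` with convergent denominators `q_k`, setting
`q_{2i,r} = r·q_{2i+1} + q_{2i}`: if `1 ≤ h < p` and `0 ≤ i < (n-1)/2` are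
such that the fractional part of `q_{2i+2}·a/p` is `<` that of `h·a/p`,
which is `<` that of `q_{2i}·a/p`, then there is `0 ≤ r ≤ a_{2i+2}` with
`‖(h - q_{2i,r})·a/p‖ < ‖q_{2i+1}·a/p‖`, and moreover
`|h - q_{2i,r}| < q_{2i+2}` implies `h = q_{2i,r}`. -/
theorem statement12
    (p a : ℤ) (hp : Prime p) (hodd : Odd p) (ha : 0 < a) (hap : a < p)
    (n : ℕ) (A P Q : ℕ → ℤ)
    -- canonical continued fraction expansion a/p = [0; A 1, …, A n]
    (hA : ∀ k, 1 ≤ k → k ≤ n → 1 ≤ A k) (hAn : 2 ≤ A n)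
    -- denominators of the convergents
    (hQ0 : Q 0 = 1) (hQ1 : Q 1 = A 1)
    (hQrec : ∀ k, k + 2 ≤ n → Q (k + 2) = A (k + 2) * Q (k + 1) + Q k)
    -- numerators of the convergents
    (hP0 : P 0 = 0) (hP1 : P 1 = 1)
    (hPrec : ∀ k, k + 2 ≤ n → P (k + 2) = A (k + 2) * P (k + 1) + P k)
    -- the n-th convergent is a/p in lowest terms
    (hQn : Q n = p) (hPn : P n = a)
    (h : ℤ) (hh1 : 1 ≤ h) (hh2 : h < p)
    (i : ℕ) (hi : (i : ℚ) < ((n : ℚ) - 1) / 2)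
    (hf1 : Int.fract (((Q (2 * i + 2) * a : ℤ) : ℝ) / (p : ℝ)) <
      Int.fract (((h * a : ℤ) : ℝ) / (p : ℝ)))
    (hf2 : Int.fract (((h * a : ℤ) : ℝ) / (p : ℝ)) <
      Int.fract (((Q (2 * i) * a : ℤ) : ℝ) / (p : ℝ))) :
    ∃ s : ℤ, 0 ≤ s ∧ s ≤ A (2 * i + 2) ∧
      distNearestInt ((((h - (s * Q (2 * i + 1) + Q (2 * i))) * a : ℤ) : ℝ) / (p : ℝ)) <
        distNearestInt (((Q (2 * i + 1) * a : ℤ) : ℝ) / (p : ℝ)) ∧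
      (|h - (s * Q (2 * i + 1) + Q (2 * i))| < Q (2 * i + 2) →
        h = s * Q (2 * i + 1) + Q (2 * i)) :=
  statement12_general p a ha hap n A P Q hA hQ0 hQ1 hQrec hP0 hP1 hPrec hQn hPn h i hi hf1 hf2
end

section
/- Let p be an odd prime and a an integer with 1 < a < p such that a does not divide p−1, and suppose the length n of the canonical continued fraction expansion a/p = [0; a_1, …, a_n] is even (so that n ≥ 4). Set i := q_{n−2} − 1 and j := q_{n−1} − q_{n−2}. Then j ≥ 0, i + j ≤ p − 1, and x̂((i+1)·a/p) + x̂((j+1)·a/p) < a/p + x̂((i+j+1)·a/p); equivalently, ⌊(i+1)a/p⌋ + ⌊(j+1)a/p⌋ > ⌊(i+j+1)a/p⌋. -/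
/-!
Put `b = a_n`. The recurrences at the last step, `p = b q_{n-1} + q_{n-2}` and
`a = b p_{n-1} + p_{n-2}`, together with the determinant identities
`p_{k+1} q_k - p_k q_{k+1} = (-1)^k` (here `n` is even) give the divisions with remainder
`q_{n-2} a = p_{n-2} p + b`, `(q_{n-1} - q_{n-2} + 1) a = (p_{n-1} - p_{n-2}) p + (a - b - 1)` and
`q_{n-1} a = (p_{n-1} - 1) p + (p - 1)`. The floors are therefore `p_{n-2}`, `p_{n-1} - p_{n-2}`
and `p_{n-1} - 1`, and the remainders `b + (a - b - 1) < a + (p - 1)`.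
The case `n = 2` is excluded by `a ∤ p - 1`, since then `p - 1 = a_1 a`.
-/

theorem floor_and_fract_intCast_div_of_eq_mul_add {c q r p : ℤ} (hc : c = q * p + r) (hr : 0 ≤ r)
    (hrp : r < p) :
    ⌊(c : ℝ) / p⌋ = q ∧ Int.fract ((c : ℝ) / p) = r / p := by
  have hp : (0 : ℝ) < p := by exact_mod_cast hr.trans_lt hrp
  have hcp : (c : ℝ) / p = q + r / p := by
    rw [hc]; push_cast; field_simp
  have hfloor : ⌊(r : ℝ) / p⌋ = 0 := Int.floor_eq_zero_iff.mpr
    ⟨by positivity, (div_lt_one hp).mpr (by exact_mod_cast hrp)⟩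
  refine ⟨?_, ?_⟩
  · rw [hcp, Int.floor_intCast_add, hfloor, add_zero]
  · rw [hcp, Int.fract_intCast_add, Int.fract, hfloor, Int.cast_zero, sub_zero]

section Continuants

variable {n : ℕ} {A X P Q : ℕ → ℤ}

theorem one_le_continuant (hA : ∀ k, 1 ≤ k → k ≤ n → 1 ≤ A k) (hX0 : 0 ≤ X 0) (hX1 : 1 ≤ X 1)
    (hrec : ∀ k, k + 2 ≤ n → X (k + 2) = A (k + 2) * X (k + 1) + X k) :
    ∀ k, 1 ≤ k → k ≤ n → 1 ≤ X k := by
  have hpair : ∀ k, k + 1 ≤ n → 0 ≤ X k ∧ 1 ≤ X (k + 1) := by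
    intro k
    induction k with
    | zero => exact fun _ ↦ ⟨hX0, hX1⟩
    | succ k ih =>
      intro hk
      obtain ⟨h0, h1⟩ := ih (by omega)
      have hAk := hA (k + 2) (by omega) hk
      refine ⟨by omega, ?_⟩
      rw [hrec k hk]
      nlinarith
  intro k hk hkn
  obtain ⟨k, rfl⟩ : ∃ k', k = k' + 1 := ⟨k - 1, by omega⟩
  exact (hpair k hkn).2

theorem continuant_det (hP0 : P 0 = 0) (hP1 : P 1 = 1) (hQ0 : Q 0 = 1)
    (hPrec : ∀ k, k + 2 ≤ n → P (k + 2) = A (k + 2) * P (k + 1) + P k)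
    (hQrec : ∀ k, k + 2 ≤ n → Q (k + 2) = A (k + 2) * Q (k + 1) + Q k) :
    ∀ k, k + 1 ≤ n → P (k + 1) * Q k - P k * Q (k + 1) = (-1) ^ k := by
  intro k hk
  induction k with
  | zero => simp [hP0, hP1, hQ0]
  | succ k ih =>
    rw [hPrec k hk, hQrec k hk, pow_succ]
    linear_combination -ih (by omega)

end Continuants

theorem floor_lt_floor_add_floor_of_convergents {p a b p₁ p₂ q₁ q₂ i j : ℤ}
    (hp : p = b * q₁ + q₂) (ha : a = b * p₁ + p₂)
    (hdet₁ : a * q₁ - p₁ * p = -1) (hdet₂ : p₁ * q₂ - p₂ * q₁ = 1)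
    (hb : 1 ≤ b) (hp₁ : 1 ≤ p₁) (hp₂ : 1 ≤ p₂) (hq₂ : 1 ≤ q₂) (hq : q₂ ≤ q₁) (hap : a < p)
    (hi : i = q₂ - 1) (hj : j = q₁ - q₂) :
    0 ≤ j ∧ i + j ≤ p - 1 ∧
      Int.fract ((((i + 1) * a : ℤ) : ℝ) / (p : ℝ)) +
          Int.fract ((((j + 1) * a : ℤ) : ℝ) / (p : ℝ)) <
        (a : ℝ) / (p : ℝ) + Int.fract ((((i + j + 1) * a : ℤ) : ℝ) / (p : ℝ)) ∧
      ⌊(((i + j + 1) * a : ℤ) : ℝ) / (p : ℝ)⌋ <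
        ⌊(((i + 1) * a : ℤ) : ℝ) / (p : ℝ)⌋ + ⌊(((j + 1) * a : ℤ) : ℝ) / (p : ℝ)⌋ := by
  subst hi hj
  have hbq : b ≤ b * q₁ := le_mul_of_one_le_right (by omega) (by omega)
  have hqb : q₁ ≤ b * q₁ := le_mul_of_one_le_left (by omega) hb
  have hbp : b ≤ b * p₁ := le_mul_of_one_le_right (by omega) hp₁
  obtain ⟨hI, hI'⟩ := floor_and_fract_intCast_div_of_eq_mul_add
    (c := (q₂ - 1 + 1) * a) (q := p₂) (r := b) (p := p)
    (by linear_combination q₂ * ha - p₂ * hp + b * hdet₂) (by omega) (by omega)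
  obtain ⟨hJ, hJ'⟩ := floor_and_fract_intCast_div_of_eq_mul_add
    (c := (q₁ - q₂ + 1) * a) (q := p₁ - p₂) (r := a - b - 1) (p := p)
    (by linear_combination hdet₁ - (q₂ * ha - p₂ * hp + b * hdet₂)) (by omega) (by omega)
  obtain ⟨hK, hK'⟩ := floor_and_fract_intCast_div_of_eq_mul_add
    (c := (q₂ - 1 + (q₁ - q₂) + 1) * a) (q := p₁ - 1) (r := p - 1) (p := p)
    (by linear_combination hdet₁) (by omega) (by omega)
  refine ⟨by omega, by omega, ?_, by omega⟩
  have hp0 : (0 : ℝ) < p := by exact_mod_cast (show 0 < p by omega)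
  rw [hI', hJ', hK', ← add_div, ← add_div, div_lt_div_iff_of_pos_right hp0]
  push_cast
  linarith

theorem statement15_general
    (p a : ℤ) (ha : 0 < a) (hap : a < p)
    (hnd : ¬ a ∣ p - 1)
    (n : ℕ) (A P Q : ℕ → ℤ)
    -- canonical continued fraction expansion a/p = [0; A 1, …, A n]
    (hA : ∀ k, 1 ≤ k → k ≤ n → 1 ≤ A k)
    -- denominators of the convergents
    (hQ0 : Q 0 = 1) (hQ1 : Q 1 = A 1)
    (hQrec : ∀ k, k + 2 ≤ n → Q (k + 2) = A (k + 2) * Q (k + 1) + Q k)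
    -- numerators of the convergents
    (hP0 : P 0 = 0) (hP1 : P 1 = 1)
    (hPrec : ∀ k, k + 2 ≤ n → P (k + 2) = A (k + 2) * P (k + 1) + P k)
    -- the n-th convergent is a/p in lowest terms
    (hQn : Q n = p) (hPn : P n = a)
    (hneven : Even n)
    (i j : ℤ) (hi : i = Q (n - 2) - 1) (hj : j = Q (n - 1) - Q (n - 2)) :
    0 ≤ j ∧ i + j ≤ p - 1 ∧
      Int.fract ((((i + 1) * a : ℤ) : ℝ) / (p : ℝ)) +
          Int.fract ((((j + 1) * a : ℤ) : ℝ) / (p : ℝ)) <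
        (a : ℝ) / (p : ℝ) + Int.fract ((((i + j + 1) * a : ℤ) : ℝ) / (p : ℝ)) ∧
      ⌊(((i + j + 1) * a : ℤ) : ℝ) / (p : ℝ)⌋ <
        ⌊(((i + 1) * a : ℤ) : ℝ) / (p : ℝ)⌋ + ⌊(((j + 1) * a : ℤ) : ℝ) / (p : ℝ)⌋ := by
  have hn0 : n ≠ 0 := by rintro rfl; omega
  have hn2 : n ≠ 2 := by
    rintro rfl
    have hp' := hQrec 0 le_rfl
    have ha' := hPrec 0 le_rfl
    simp only [zero_add, hQn, hQ1, hQ0, hPn, hP1, hP0, mul_one, add_zero] at hp' ha'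
    exact hnd ⟨A 1, by rw [hp', ha']; ring⟩
  obtain ⟨s, rfl⟩ : ∃ s, n = 2 * s + 4 := by obtain ⟨t, rfl⟩ := hneven; exact ⟨t - 2, by omega⟩
  have hPpos := one_le_continuant hA (by omega) (by omega) hPrec
  have hQpos := one_le_continuant hA (by omega) (by rw [hQ1]; exact hA 1 le_rfl (by omega)) hQrec
  have hdet := continuant_det (A := A) hP0 hP1 hQ0 hPrec hQrec
  have hdet₁ := hdet (2 * s + 3) le_rfl
  have hdet₂ := hdet (2 * s + 2) (by omega)
  rw [hPn, hQn, Odd.neg_one_pow ⟨s + 1, by ring⟩] at hdet₁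
  rw [Even.neg_one_pow ⟨s + 1, by ring⟩] at hdet₂
  have hq := hQrec (2 * s + 1) (by omega)
  refine floor_lt_floor_add_floor_of_convergents (hQn ▸ hQrec (2 * s + 2) le_rfl)
    (hPn ▸ hPrec (2 * s + 2) le_rfl) hdet₁ hdet₂
    (hA _ (by omega) le_rfl) (hPpos _ (by omega) (by omega)) (hPpos _ (by omega) (by omega))
    (hQpos _ (by omega) (by omega)) ?_ hap hi hj
  rw [hq]
  nlinarith [hA (2 * s + 3) (by omega) (by omega), hQpos (2 * s + 1) (by omega) (by omega),
    hQpos (2 * s + 2) (by omega) (by omega)]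

/-- Part of the proof of Proposition 6.14 (even case): let `a/p = [0; a_1, …, a_n]`
be the canonical continued fraction expansion with `1 < a < p`, `a ∤ p - 1`
and `n` even (so that `n ≥ 4`). Setting `i = q_{n-2} - 1` and
`j = q_{n-1} - q_{n-2}`, one has `j ≥ 0`, `i + j ≤ p - 1` and
`{(i+1)a/p} + {(j+1)a/p} < a/p + {(i+j+1)a/p}`, equivalently
`⌊(i+1)a/p⌋ + ⌊(j+1)a/p⌋ > ⌊(i+j+1)a/p⌋`. -/
theorem statement15
    (p a : ℤ) (hp : Prime p) (hodd : Odd p) (ha : 0 < a) (hap : a < p)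
    (ha1 : 1 < a) (hnd : ¬ a ∣ p - 1)
    (n : ℕ) (A P Q : ℕ → ℤ)
    -- canonical continued fraction expansion a/p = [0; A 1, …, A n]
    (hA : ∀ k, 1 ≤ k → k ≤ n → 1 ≤ A k) (hAn : 2 ≤ A n)
    -- denominators of the convergents
    (hQ0 : Q 0 = 1) (hQ1 : Q 1 = A 1)
    (hQrec : ∀ k, k + 2 ≤ n → Q (k + 2) = A (k + 2) * Q (k + 1) + Q k)
    -- numerators of the convergents
    (hP0 : P 0 = 0) (hP1 : P 1 = 1)
    (hPrec : ∀ k, k + 2 ≤ n → P (k + 2) = A (k + 2) * P (k + 1) + P k)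
    -- the n-th convergent is a/p in lowest terms
    (hQn : Q n = p) (hPn : P n = a)
    (hneven : Even n)
    (i j : ℤ) (hi : i = Q (n - 2) - 1) (hj : j = Q (n - 1) - Q (n - 2)) :
    0 ≤ j ∧ i + j ≤ p - 1 ∧
      Int.fract ((((i + 1) * a : ℤ) : ℝ) / (p : ℝ)) +
          Int.fract ((((j + 1) * a : ℤ) : ℝ) / (p : ℝ)) <
        (a : ℝ) / (p : ℝ) + Int.fract ((((i + j + 1) * a : ℤ) : ℝ) / (p : ℝ)) ∧
      ⌊(((i + j + 1) * a : ℤ) : ℝ) / (p : ℝ)⌋ <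
        ⌊(((i + 1) * a : ℤ) : ℝ) / (p : ℝ)⌋ + ⌊(((j + 1) * a : ℤ) : ℝ) / (p : ℝ)⌋ :=
  statement15_general p a ha hap hnd n A P Q hA hQ0 hQ1 hQrec hP0 hP1 hPrec hQn hPn hneven i j hi hj
end
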